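/- arXiv:1201.0366 — 13 statements merged into one kernel-verified Lean document; each statement's English description precedes it below -/
import Mathlib

section
/- Let p be a prime and F a finite-dimensional F_p-vector space with a direct sum decomposition F = U_1 ⊕ ... ⊕ U_n. For each i = 1,...,n let *_i be a binary operation on F that is additive in each argument, and let A_i ⊆ F be an F_p-subspace with dim_{F_p} A_i + dim_{F_p} U_i = dim_{F_p} F. Assume the set {(*_i, A_i)} is compatible, i.e. whenever x *_i y ∈ A_i for every i, then x = 0 or y = 0. If for each i, f_i : F → U_i is an F_p-linear map with kernel A_i, then the product x ∘ y := Σ_i f_i(x *_i y) makes (F, +, ∘) a presemifield: ∘ is additive in each argument and x ∘ y = 0 implies x = 0 or y = 0. -/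
/-!
Biadditivity of `x ∘ y = ∑ i, f i (x ⋆ᵢ y)` is inherited from the `⋆ᵢ`. Since `f i` takes values
in `U i` and the `U i` are independent, the sum vanishes only when every summand does, i.e. when
`x ⋆ᵢ y ∈ ker (f i) = A i` for all `i`; compatibility then forces `x = 0` or `y = 0`.
-/

open Finset

section

variable {R M ι : Type*} [Ring R] [AddCommGroup M] [Module R M] [Fintype ι]

theorem iSupIndep.sum_eq_zero_iff {U : ι → Submodule R M} (hU : iSupIndep U) {v : ι → M}
    (hv : ∀ i, v i ∈ U i) : ∑ i, v i = 0 ↔ ∀ i, v i = 0 :=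
  ⟨fun h i => (iSupIndep_iff_finsetSum_eq_zero_imp_eq_zero U).1 hU univ v
      (fun i _ => hv i) h i (mem_univ i),
    fun h => sum_eq_zero fun i _ => h i⟩

def projectionProduct (star : ι → M → M → M) (f : ι → M →ₗ[R] M) (x y : M) : M :=
  ∑ i, f i (star i x y)

section projectionProduct

variable {star : ι → M → M → M} (f : ι → M →ₗ[R] M)

theorem projectionProduct_add_left
    (hstar : ∀ i (x y z : M), star i (x + y) z = star i x z + star i y z) (x y z : M) :
    projectionProduct star f (x + y) z =
      projectionProduct star f x z + projectionProduct star f y z := by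
  simp only [projectionProduct, hstar, map_add, sum_add_distrib]

theorem projectionProduct_add_right
    (hstar : ∀ i (x y z : M), star i x (y + z) = star i x y + star i x z) (x y z : M) :
    projectionProduct star f x (y + z) =
      projectionProduct star f x y + projectionProduct star f x z := by
  simp only [projectionProduct, hstar, map_add, sum_add_distrib]

theorem projectionProduct_eq_zero_iff {U : ι → Submodule R M} (hU : iSupIndep U)
    (hrange : ∀ i, LinearMap.range (f i) ≤ U i) (x y : M) :
    projectionProduct star f x y = 0 ↔ ∀ i, star i x y ∈ LinearMap.ker (f i) :=
  hU.sum_eq_zero_iff fun i => hrange i (LinearMap.mem_range_self _ _)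

end projectionProduct

end

theorem projection_construction_presemifield_general
    (p : ℕ) (F : Type*) [AddCommGroup F]
    [Module (ZMod p) F] (n : ℕ)
    (U A : Fin n → Submodule (ZMod p) F)
    (hdirect : DirectSum.IsInternal U)
    (star : Fin n → F → F → F)
    (hstar_addl : ∀ i (x y z : F), star i (x + y) z = star i x z + star i y z)
    (hstar_addr : ∀ i (x y z : F), star i x (y + z) = star i x y + star i x z)
    (hcompat : ∀ x y : F, (∀ i, star i x y ∈ A i) → x = 0 ∨ y = 0)
    (f : Fin n → F →ₗ[ZMod p] F)
    (hrange : ∀ i, LinearMap.range (f i) ≤ U i)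
    (hker : ∀ i, LinearMap.ker (f i) = A i) :
    (∀ x y z : F, (∑ i, f i (star i (x + y) z))
        = (∑ i, f i (star i x z)) + (∑ i, f i (star i y z))) ∧
    (∀ x y z : F, (∑ i, f i (star i x (y + z)))
        = (∑ i, f i (star i x y)) + (∑ i, f i (star i x z))) ∧
    (∀ x y : F, (∑ i, f i (star i x y)) = 0 → x = 0 ∨ y = 0) := by
  refine ⟨projectionProduct_add_left f hstar_addl, projectionProduct_add_right f hstar_addr,
    fun x y hxy => hcompat x y fun i => ?_⟩
  rw [← hker i]
  exact (projectionProduct_eq_zero_iff f hdirect.submodule_iSupIndep hrange x y).1 hxy i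

/-- Proposition 2.2 (projection construction of presemifields). -/
theorem projection_construction_presemifield
    (p : ℕ) [Fact p.Prime] (F : Type*) [AddCommGroup F]
    [Module (ZMod p) F] [FiniteDimensional (ZMod p) F] (n : ℕ)
    (U A : Fin n → Submodule (ZMod p) F)
    (hdirect : DirectSum.IsInternal U)
    (star : Fin n → F → F → F)
    (hstar_addl : ∀ i (x y z : F), star i (x + y) z = star i x z + star i y z)
    (hstar_addr : ∀ i (x y z : F), star i x (y + z) = star i x y + star i x z)
    (hdim : ∀ i, Module.finrank (ZMod p) (A i) + Module.finrank (ZMod p) (U i)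
      = Module.finrank (ZMod p) F)
    (hcompat : ∀ x y : F, (∀ i, star i x y ∈ A i) → x = 0 ∨ y = 0)
    (f : Fin n → F →ₗ[ZMod p] F)
    (hrange : ∀ i, LinearMap.range (f i) ≤ U i)
    (hker : ∀ i, LinearMap.ker (f i) = A i) :
    (∀ x y z : F, (∑ i, f i (star i (x + y) z))
        = (∑ i, f i (star i x z)) + (∑ i, f i (star i y z))) ∧
    (∀ x y z : F, (∑ i, f i (star i x (y + z)))
        = (∑ i, f i (star i x y)) + (∑ i, f i (star i x z))) ∧
    (∀ x y : F, (∑ i, f i (star i x y)) = 0 → x = 0 ∨ y = 0) :=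
  projection_construction_presemifield_general p F n U A hdirect star hstar_addl hstar_addr hcompat
    f hrange hker
end

section
/- Let F be a finite field with subfields F₁ ⊆ F₂ ⊆ F, and let * be a presemifield product on F (additive in each argument, no zero divisors) such that (i) (ax)*y = x*(ay) = a(x*y) for all x,y ∈ F and a ∈ F₁, and (ii) (xk)*y = x*(ky) for all x,y ∈ F and k ∈ F₂. Let β, γ : F → F satisfy 1*β(x) = x and γ(x)*1 = 1*x for all x ∈ F, and define x∘y := β(γ(x)*y). Then (F,+,∘) is a semifield with identity element 1, every element of F₁ lies in the center of (F,+,∘), every element of F₂ lies in the middle nucleus of (F,+,∘), and k∘y = yk for all y ∈ F and k ∈ F₂. -/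
/-- The semifield product `x ∘ y := β (γ x * y)` associated with a presemifield product. -/
def circOp {F : Type*} (star : F → F → F) (β γ : F → F) (x y : F) : F :=
  β (star (γ x) y)

/-
Since `1 * ·` and `· * 1` are injective additive maps, `β` and `γ` are additive and inherit every
`F₁`-linearity of `*`, and `γ` fixes each `k` with `k * 1 = 1 * k`. For such a middle scalar `k`
this gives `k ∘ y = β (1 * k y) = k y` and `γ (x ∘ k) = γ x k`, hence `(x ∘ k) ∘ y = x ∘ (k ∘ y)`.
In a commutative ring the elements of `F₁` are middle scalars, and they pull out of both
arguments of `∘`, which places them in the center.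
-/

open Function

structure IsPresemifieldMul {G : Type*} [AddGroup G] (star : G → G → G) : Prop where
  add_left : ∀ x y z, star (x + y) z = star x z + star y z
  add_right : ∀ x y z, star x (y + z) = star x y + star x z
  eq_zero_or_eq_zero : ∀ x y, star x y = 0 → x = 0 ∨ y = 0

namespace IsPresemifieldMul

section AddGroup

variable {G : Type*} [AddGroup G] {star : G → G → G}

theorem star_right_injective (h : IsPresemifieldMul star) {x : G} (hx : x ≠ 0) :
    Injective (star x) :=
  (injective_iff_map_eq_zero (AddMonoidHom.mk' (star x) (h.add_right x))).2 fun y hy =>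
    (h.eq_zero_or_eq_zero x y hy).resolve_left hx

theorem star_left_injective (h : IsPresemifieldMul star) {y : G} (hy : y ≠ 0) :
    Injective (star · y) :=
  (injective_iff_map_eq_zero (AddMonoidHom.mk' (star · y) (h.add_left · · y))).2 fun x hx =>
    (h.eq_zero_or_eq_zero x y hx).resolve_right hy

theorem star_zero_left (h : IsPresemifieldMul star) (y : G) : star 0 y = 0 :=
  (AddMonoidHom.mk' (star · y) (h.add_left · · y)).map_zero

theorem star_zero_right (h : IsPresemifieldMul star) (x : G) : star x 0 = 0 :=
  (AddMonoidHom.mk' (star x) (h.add_right x)).map_zero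

end AddGroup

section Ring

variable {R : Type*} [Ring R] [Nontrivial R] {star : R → R → R} {β γ : R → R}

theorem apply_star_one (h : IsPresemifieldMul star) (hβ : ∀ x, star 1 (β x) = x) (x : R) :
    β (star 1 x) = x :=
  LeftInverse.rightInverse_of_injective hβ (h.star_right_injective one_ne_zero) x

theorem map_add_of_star_one_apply (h : IsPresemifieldMul star) (hβ : ∀ x, star 1 (β x) = x)
    (s t : R) : β (s + t) = β s + β t :=
  h.star_right_injective one_ne_zero (by rw [h.add_right, hβ, hβ, hβ])

theorem map_add_of_apply_star_one (h : IsPresemifieldMul star)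
    (hγ : ∀ x, star (γ x) 1 = star 1 x) (x y : R) : γ (x + y) = γ x + γ y :=
  h.star_left_injective one_ne_zero (by simp only [hγ, h.add_left, h.add_right])

theorem map_mul_of_star_one_apply (h : IsPresemifieldMul star) (hβ : ∀ x, star 1 (β x) = x)
    {a : R} (ha : ∀ x y, star x (a * y) = a * star x y) (t : R) : β (a * t) = a * β t :=
  h.star_right_injective one_ne_zero (by rw [hβ, ha, hβ])

theorem map_mul_of_apply_star_one (h : IsPresemifieldMul star)
    (hγ : ∀ x, star (γ x) 1 = star 1 x) {a : R} (ha₁ : ∀ x y, star (a * x) y = a * star x y)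
    (ha₂ : ∀ x y, star x (a * y) = a * star x y) (x : R) : γ (a * x) = a * γ x :=
  h.star_left_injective one_ne_zero (by simp only [hγ, ha₁, ha₂])

theorem circOp_add_left (h : IsPresemifieldMul star) (hβ : ∀ x, star 1 (β x) = x)
    (hγ : ∀ x, star (γ x) 1 = star 1 x) (x y z : R) :
    circOp star β γ (x + y) z = circOp star β γ x z + circOp star β γ y z := by
  simp only [circOp, h.map_add_of_apply_star_one hγ, h.add_left, h.map_add_of_star_one_apply hβ]

theorem circOp_add_right (h : IsPresemifieldMul star) (hβ : ∀ x, star 1 (β x) = x)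
    (x y z : R) : circOp star β γ x (y + z) = circOp star β γ x y + circOp star β γ x z := by
  simp only [circOp, h.add_right, h.map_add_of_star_one_apply hβ]

theorem circOp_eq_zero (h : IsPresemifieldMul star) (hβ : ∀ x, star 1 (β x) = x)
    (hγ : ∀ x, star (γ x) 1 = star 1 x) {x y : R} (hxy : circOp star β γ x y = 0) :
    x = 0 ∨ y = 0 := by
  have hstar : star (γ x) y = 0 := by
    rw [← hβ (star (γ x) y), show β (star (γ x) y) = 0 from hxy, h.star_zero_right]
  refine (h.eq_zero_or_eq_zero _ _ hstar).imp_left fun hγx => ?_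
  have hx : star 1 x = 0 := by rw [← hγ, hγx, h.star_zero_left]
  exact (h.eq_zero_or_eq_zero _ _ hx).resolve_left one_ne_zero

theorem circOp_one_right (h : IsPresemifieldMul star) (hβ : ∀ x, star 1 (β x) = x)
    (hγ : ∀ x, star (γ x) 1 = star 1 x) (x : R) : circOp star β γ x 1 = x := by
  rw [circOp, hγ, h.apply_star_one hβ]

theorem apply_eq_self_of_middle (h : IsPresemifieldMul star) {k : R}
    (hk : ∀ x y, star (x * k) y = star x (k * y)) (hγ : ∀ x, star (γ x) 1 = star 1 x) : γ k = k :=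
  h.star_left_injective one_ne_zero <| by
    simpa only [hγ, one_mul, mul_one] using (hk 1 1).symm

theorem circOp_middle_left (h : IsPresemifieldMul star) {k : R}
    (hk : ∀ x y, star (x * k) y = star x (k * y)) (hβ : ∀ x, star 1 (β x) = x)
    (hγ : ∀ x, star (γ x) 1 = star 1 x) (y : R) : circOp star β γ k y = k * y := by
  rw [circOp, h.apply_eq_self_of_middle hk hγ, ← h.apply_star_one hβ (k * y), ← hk, one_mul]

theorem circOp_assoc_middle (h : IsPresemifieldMul star) {k : R}
    (hk : ∀ x y, star (x * k) y = star x (k * y)) (hβ : ∀ x, star 1 (β x) = x)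
    (hγ : ∀ x, star (γ x) 1 = star 1 x) (x y : R) :
    circOp star β γ (circOp star β γ x k) y = circOp star β γ x (circOp star β γ k y) := by
  have hγxk : γ (circOp star β γ x k) = γ x * k :=
    h.star_left_injective one_ne_zero <| by
      simp only [hγ, circOp, hβ, hk, mul_one]
  rw [circOp, hγxk, hk, h.circOp_middle_left hk hβ hγ, circOp]

theorem circOp_one_left (h : IsPresemifieldMul star) (hβ : ∀ x, star 1 (β x) = x)
    (hγ : ∀ x, star (γ x) 1 = star 1 x) (y : R) : circOp star β γ 1 y = y := by
  simpa only [one_mul] using h.circOp_middle_left (k := 1) (by simp) hβ hγ y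

theorem circOp_mul_left (h : IsPresemifieldMul star) (hβ : ∀ x, star 1 (β x) = x)
    (hγ : ∀ x, star (γ x) 1 = star 1 x) {a : R} (ha₁ : ∀ x y, star (a * x) y = a * star x y)
    (ha₂ : ∀ x y, star x (a * y) = a * star x y) (x y : R) :
    circOp star β γ (a * x) y = a * circOp star β γ x y := by
  rw [circOp, h.map_mul_of_apply_star_one hγ ha₁ ha₂, ha₁, h.map_mul_of_star_one_apply hβ ha₂,
    circOp]

theorem circOp_mul_right (h : IsPresemifieldMul star) (hβ : ∀ x, star 1 (β x) = x)
    {a : R} (ha : ∀ x y, star x (a * y) = a * star x y) (x y : R) :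
    circOp star β γ x (a * y) = a * circOp star β γ x y := by
  rw [circOp, ha, h.map_mul_of_star_one_apply hβ ha, circOp]

theorem circOp_scalar_right (h : IsPresemifieldMul star) (hβ : ∀ x, star 1 (β x) = x)
    (hγ : ∀ x, star (γ x) 1 = star 1 x) {a : R} (ha : ∀ x y, star x (a * y) = a * star x y)
    (x : R) : circOp star β γ x a = a * x := by
  simpa only [mul_one, h.circOp_one_right hβ hγ] using h.circOp_mul_right (γ := γ) hβ ha x 1

end Ring

end IsPresemifieldMul

theorem middle_of_mul_left_of_mul_right {R : Type*} [CommRing R] {star : R → R → R} {a : R}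
    (ha₁ : ∀ x y, star (a * x) y = a * star x y) (ha₂ : ∀ x y, star x (a * y) = a * star x y)
    (x y : R) : star (x * a) y = star x (a * y) := by
  rw [mul_comm, ha₁, ha₂]

theorem presemifield_to_semifield_center_middle_nucleus_general
    (F : Type*) [Field F] (F1 F2 : Subfield F)
    (star : F → F → F)
    (haddl : ∀ x y z : F, star (x + y) z = star x z + star y z)
    (haddr : ∀ x y z : F, star x (y + z) = star x y + star x z)
    (hnz : ∀ x y : F, star x y = 0 → x = 0 ∨ y = 0)
    (hi1 : ∀ a ∈ F1, ∀ x y : F, star (a * x) y = a * star x y)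
    (hi2 : ∀ a ∈ F1, ∀ x y : F, star x (a * y) = a * star x y)
    (hii : ∀ k ∈ F2, ∀ x y : F, star (x * k) y = star x (k * y))
    (β γ : F → F)
    (hβ : ∀ x, star 1 (β x) = x)
    (hγ : ∀ x, star (γ x) 1 = star 1 x) :
    (∀ x y z : F, circOp star β γ (x + y) z = circOp star β γ x z + circOp star β γ y z) ∧
    (∀ x y z : F, circOp star β γ x (y + z) = circOp star β γ x y + circOp star β γ x z) ∧
    (∀ x y : F, circOp star β γ x y = 0 → x = 0 ∨ y = 0) ∧
    (∀ x : F, circOp star β γ x 1 = x) ∧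
    (∀ x : F, circOp star β γ 1 x = x) ∧
    (∀ a ∈ F1,
      (∀ x : F, circOp star β γ a x = circOp star β γ x a) ∧
      (∀ x y : F, circOp star β γ (circOp star β γ a x) y
        = circOp star β γ a (circOp star β γ x y)) ∧
      (∀ x y : F, circOp star β γ (circOp star β γ x a) y
        = circOp star β γ x (circOp star β γ a y)) ∧
      (∀ x y : F, circOp star β γ (circOp star β γ x y) a
        = circOp star β γ x (circOp star β γ y a))) ∧
    (∀ k ∈ F2,
      (∀ x y : F, circOp star β γ (circOp star β γ x k) y
        = circOp star β γ x (circOp star β γ k y)) ∧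
      (∀ y : F, circOp star β γ k y = y * k)) := by
  have h : IsPresemifieldMul star := ⟨haddl, haddr, hnz⟩
  refine ⟨h.circOp_add_left hβ hγ, h.circOp_add_right hβ, fun x y => h.circOp_eq_zero hβ hγ,
    h.circOp_one_right hβ hγ, h.circOp_one_left hβ hγ, fun a ha => ?_, fun k hk =>
    ⟨h.circOp_assoc_middle (hii k hk) hβ hγ, fun y => by
      rw [h.circOp_middle_left (hii k hk) hβ hγ, mul_comm]⟩⟩
  have hmid := middle_of_mul_left_of_mul_right (hi1 a ha) (hi2 a ha)
  have hleft := h.circOp_middle_left hmid hβ hγ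
  have hright := h.circOp_scalar_right hβ hγ (hi2 a ha)
  refine ⟨fun x => by rw [hleft, hright], fun x y => ?_, h.circOp_assoc_middle hmid hβ hγ,
    fun x y => ?_⟩
  · rw [hleft, hleft, h.circOp_mul_left hβ hγ (hi1 a ha) (hi2 a ha)]
  · rw [hright, hright, h.circOp_mul_right hβ (hi2 a ha)]

/-- Proposition 3.1. -/
theorem presemifield_to_semifield_center_middle_nucleus
    (F : Type*) [Field F] [Fintype F] (F1 F2 : Subfield F) (h12 : F1 ≤ F2)
    (star : F → F → F)
    (haddl : ∀ x y z : F, star (x + y) z = star x z + star y z)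
    (haddr : ∀ x y z : F, star x (y + z) = star x y + star x z)
    (hnz : ∀ x y : F, star x y = 0 → x = 0 ∨ y = 0)
    (hi1 : ∀ a ∈ F1, ∀ x y : F, star (a * x) y = a * star x y)
    (hi2 : ∀ a ∈ F1, ∀ x y : F, star x (a * y) = a * star x y)
    (hii : ∀ k ∈ F2, ∀ x y : F, star (x * k) y = star x (k * y))
    (β γ : F → F)
    (hβ : ∀ x, star 1 (β x) = x)
    (hγ : ∀ x, star (γ x) 1 = star 1 x) :
    (∀ x y z : F, circOp star β γ (x + y) z = circOp star β γ x z + circOp star β γ y z) ∧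
    (∀ x y z : F, circOp star β γ x (y + z) = circOp star β γ x y + circOp star β γ x z) ∧
    (∀ x y : F, circOp star β γ x y = 0 → x = 0 ∨ y = 0) ∧
    (∀ x : F, circOp star β γ x 1 = x) ∧
    (∀ x : F, circOp star β γ 1 x = x) ∧
    (∀ a ∈ F1,
      (∀ x : F, circOp star β γ a x = circOp star β γ x a) ∧
      (∀ x y : F, circOp star β γ (circOp star β γ a x) y
        = circOp star β γ a (circOp star β γ x y)) ∧
      (∀ x y : F, circOp star β γ (circOp star β γ x a) y
        = circOp star β γ x (circOp star β γ a y)) ∧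
      (∀ x y : F, circOp star β γ (circOp star β γ x y) a
        = circOp star β γ x (circOp star β γ y a))) ∧
    (∀ k ∈ F2,
      (∀ x y : F, circOp star β γ (circOp star β γ x k) y
        = circOp star β γ x (circOp star β γ k y)) ∧
      (∀ y : F, circOp star β γ k y = y * k)) :=
  presemifield_to_semifield_center_middle_nucleus_general F F1 F2 star haddl haddr hnz hi1 hi2 hii β
    γ hβ hγ
end

section
/- Let F be a finite field and * a presemifield product on F (additive in each argument, no zero divisors). Let β, γ : F → F satisfy 1*β(x) = x and γ(x)*1 = 1*x for all x ∈ F, and define x∘y := β(γ(x)*y). Then: (a) any x ∈ F satisfying (γ(x)y)*z = γ(x)(y*z) for all y,z ∈ F lies in the left nucleus of (F,+,∘); (b) any z ∈ F satisfying x*(yz) = z(x*y) for all x,y ∈ F lies in the right nucleus of (F,+,∘) and satisfies y∘z = yz for all y ∈ F (juxtaposition denoting the field multiplication of F). -/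
open Function

section Injectivity

variable {G : Type*} [AddGroup G] {star : G → G → G}

theorem star_left_injective (haddl : ∀ x y z : G, star (x + y) z = star x z + star y z)
    (hnz : ∀ x y : G, star x y = 0 → x = 0 ∨ y = 0) {b : G} (hb : b ≠ 0) :
    Injective (star · b) :=
  (injective_iff_map_eq_zero (AddMonoidHom.mk' (star · b) fun x y ↦ haddl x y b)).2
    fun a ha ↦ (hnz a b ha).resolve_right hb

theorem star_right_injective (haddr : ∀ x y z : G, star x (y + z) = star x y + star x z)
    (hnz : ∀ x y : G, star x y = 0 → x = 0 ∨ y = 0) {a : G} (ha : a ≠ 0) :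
    Injective (star a) :=
  (injective_iff_map_eq_zero (AddMonoidHom.mk' (star a) (haddr a))).2
    fun b hb ↦ (hnz a b hb).resolve_left ha

end Injectivity

section Nuclei

variable {F : Type*} [Ring F] {star : F → F → F} {β γ : F → F}

theorem star_eq_mul_star_one {c : F} (hc : ∀ y z : F, star (c * y) z = c * star y z) (w : F) :
    star c w = c * star 1 w := by
  simpa using hc 1 w

theorem gamma_circOp_of_left (hR : Injective (star · 1)) (hβ : LeftInverse (star 1) β)
    (hγ : ∀ x, star (γ x) 1 = star 1 x) {x : F}
    (hx : ∀ y z : F, star (γ x * y) z = γ x * star y z) (y : F) :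
    γ (circOp star β γ x y) = γ x * γ y := by
  refine hR (?_ : star _ 1 = star _ 1)
  rw [hγ, circOp, hβ (star _ _), hx, hγ, ← star_eq_mul_star_one hx]

theorem circOp_assoc_of_left (hR : Injective (star · 1)) (hβ : LeftInverse (star 1) β)
    (hγ : ∀ x, star (γ x) 1 = star 1 x) {x : F}
    (hx : ∀ y z : F, star (γ x * y) z = γ x * star y z) (y z : F) :
    circOp star β γ (circOp star β γ x y) z = circOp star β γ x (circOp star β γ y z) := by
  rw [circOp, gamma_circOp_of_left hR hβ hγ hx, hx, circOp, circOp, star_eq_mul_star_one hx, hβ (star _ _)]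

theorem circOp_eq_mul_of_right (hL : Injective (star 1)) (hβ : LeftInverse (star 1) β)
    (hγ : ∀ x, star (γ x) 1 = star 1 x) {z : F}
    (hz : ∀ x y : F, star x (y * z) = z * star x y) (y : F) :
    circOp star β γ y z = y * z := by
  have hγyz : star (γ y) z = star 1 (y * z) := by
    rw [hz 1 y, ← hγ, ← hz (γ y) 1, one_mul]
  rw [circOp, hγyz, hβ.rightInverse_of_injective hL]

theorem circOp_assoc_of_right (hL : Injective (star 1)) (hβ : LeftInverse (star 1) β)
    (hγ : ∀ x, star (γ x) 1 = star 1 x) {z : F}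
    (hz : ∀ x y : F, star x (y * z) = z * star x y) (x y : F) :
    circOp star β γ (circOp star β γ x y) z = circOp star β γ x (circOp star β γ y z) := by
  simp only [circOp_eq_mul_of_right hL hβ hγ hz]
  apply hL
  rw [hz 1, circOp, circOp, hβ (star _ _), hβ (star _ _), hz]

end Nuclei

theorem left_and_right_nucleus_criteria_general
    (F : Type*) [Field F]
    (star : F → F → F)
    (haddl : ∀ x y z : F, star (x + y) z = star x z + star y z)
    (haddr : ∀ x y z : F, star x (y + z) = star x y + star x z)
    (hnz : ∀ x y : F, star x y = 0 → x = 0 ∨ y = 0)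
    (β γ : F → F)
    (hβ : ∀ x, star 1 (β x) = x)
    (hγ : ∀ x, star (γ x) 1 = star 1 x) :
    (∀ x : F, (∀ y z : F, star (γ x * y) z = γ x * star y z) →
      ∀ y z : F, circOp star β γ (circOp star β γ x y) z
        = circOp star β γ x (circOp star β γ y z)) ∧
    (∀ z : F, (∀ x y : F, star x (y * z) = z * star x y) →
      (∀ x y : F, circOp star β γ (circOp star β γ x y) z
        = circOp star β γ x (circOp star β γ y z)) ∧
      (∀ y : F, circOp star β γ y z = y * z)) := by
  have hL := star_right_injective haddr hnz one_ne_zero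
  have hR := star_left_injective haddl hnz one_ne_zero
  exact ⟨fun x hx ↦ circOp_assoc_of_left hR hβ hγ hx,
    fun z hz ↦ ⟨circOp_assoc_of_right hL hβ hγ hz, circOp_eq_mul_of_right hL hβ hγ hz⟩⟩

/-- Proposition 3.2. -/
theorem left_and_right_nucleus_criteria
    (F : Type*) [Field F] [Fintype F]
    (star : F → F → F)
    (haddl : ∀ x y z : F, star (x + y) z = star x z + star y z)
    (haddr : ∀ x y z : F, star x (y + z) = star x y + star x z)
    (hnz : ∀ x y : F, star x y = 0 → x = 0 ∨ y = 0)
    (β γ : F → F)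
    (hβ : ∀ x, star 1 (β x) = x)
    (hγ : ∀ x, star (γ x) 1 = star 1 x) :
    (∀ x : F, (∀ y z : F, star (γ x * y) z = γ x * star y z) →
      ∀ y z : F, circOp star β γ (circOp star β γ x y) z
        = circOp star β γ x (circOp star β γ y z)) ∧
    (∀ z : F, (∀ x y : F, star x (y * z) = z * star x y) →
      (∀ x y : F, circOp star β γ (circOp star β γ x y) z
        = circOp star β γ x (circOp star β γ y z)) ∧
      (∀ y : F, circOp star β γ y z = y * z)) :=
  left_and_right_nucleus_criteria_general F star haddl haddr hnz β γ hβ hγ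
end

section
/- Let (F,+,*) be a finite presemifield, fix e ≠ 0 in F, and let α : F → F be the (unique) map satisfying α(x)*e = x for all x ∈ F. Then (F,+,*) is isotopic to a commutative presemifield if and only if there exists v ≠ 0 in F such that α(v*x)*y = α(v*y)*x for all x,y ∈ F. -/
/-!
If `∘` is commutative and `A x ∘ B y = C (x * y)`, then cancelling `B e` in
`A (α (v * x)) ∘ B e = C (v * x) = A v ∘ B x` with `v = A⁻¹ (B e)` gives `A (α (v * x)) = B x`,
so `α (v * x) * y = C⁻¹ (B x ∘ B y)` is symmetric in `x, y`. Conversely, on a finite presemifield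
`x ↦ α (v * x)` is an additive bijection `T`, so `x ∘ y := T x * y` is a presemifield product
isotopic to `*`, and the criterion says precisely that it is commutative.
-/

structure IsPresemifieldMul_s4 {F : Type*} [AddCommGroup F] (mul : F → F → F) : Prop where
  add_mul : ∀ x y z, mul (x + y) z = mul x z + mul y z
  mul_add : ∀ x y z, mul x (y + z) = mul x y + mul x z
  eq_zero_or_eq_zero_of_mul_eq_zero : ∀ x y, mul x y = 0 → x = 0 ∨ y = 0

namespace IsPresemifieldMul_s4

variable {F : Type*} [AddCommGroup F] {mul : F → F → F}

def mulLeft (h : IsPresemifieldMul_s4 mul) (v : F) : F →+ F :=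
  AddMonoidHom.mk' (mul v) (h.mul_add v)

def mulRight (h : IsPresemifieldMul_s4 mul) (e : F) : F →+ F :=
  AddMonoidHom.mk' (mul · e) (fun x y => h.add_mul x y e)

theorem mulLeft_injective (h : IsPresemifieldMul_s4 mul) {v : F} (hv : v ≠ 0) :
    Function.Injective (h.mulLeft v) :=
  (injective_iff_map_eq_zero _).mpr fun x hx =>
    (h.eq_zero_or_eq_zero_of_mul_eq_zero v x hx).resolve_left hv

theorem mulRight_injective (h : IsPresemifieldMul_s4 mul) {e : F} (he : e ≠ 0) :
    Function.Injective (h.mulRight e) :=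
  (injective_iff_map_eq_zero _).mpr fun x hx =>
    (h.eq_zero_or_eq_zero_of_mul_eq_zero x e hx).resolve_right he

theorem mul_right_cancel (h : IsPresemifieldMul_s4 mul) {e x y : F} (he : e ≠ 0)
    (hxy : mul x e = mul y e) : x = y :=
  h.mulRight_injective he hxy

noncomputable def mulLeftEquiv [Finite F] (h : IsPresemifieldMul_s4 mul) {v : F} (hv : v ≠ 0) :
    F ≃+ F :=
  AddEquiv.ofBijective (h.mulLeft v) (Finite.injective_iff_bijective.mp (h.mulLeft_injective hv))

noncomputable def mulRightEquiv [Finite F] (h : IsPresemifieldMul_s4 mul) {e : F} (he : e ≠ 0) :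
    F ≃+ F :=
  AddEquiv.ofBijective (h.mulRight e)
    (Finite.injective_iff_bijective.mp (h.mulRight_injective he))

theorem eq_mulRightEquiv_symm [Finite F] (h : IsPresemifieldMul_s4 mul) {e : F} (he : e ≠ 0)
    {α : F → F} (hα : ∀ x, mul (α x) e = x) (x : F) :
    α x = (h.mulRightEquiv he).symm x :=
  (AddEquiv.eq_symm_apply _).mpr (hα x)

theorem precomp (h : IsPresemifieldMul_s4 mul) (T : F ≃+ F) :
    IsPresemifieldMul_s4 fun x y => mul (T x) y where
  add_mul x y z := by simp only [map_add, h.add_mul]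
  mul_add x y z := h.mul_add (T x) y z
  eq_zero_or_eq_zero_of_mul_eq_zero x y hxy :=
    (h.eq_zero_or_eq_zero_of_mul_eq_zero _ _ hxy).imp_left T.map_eq_zero_iff.mp

end IsPresemifieldMul_s4

theorem exists_ganley_vector_of_isotopic_comm {F : Type*} [AddCommGroup F]
    {mul cdot : F → F → F} (hcdot : IsPresemifieldMul_s4 cdot) (hcomm : ∀ x y, cdot x y = cdot y x)
    (A B C : F ≃+ F) (hiso : ∀ x y, cdot (A x) (B y) = C (mul x y))
    {e : F} (he : e ≠ 0) {α : F → F} (hα : ∀ x, mul (α x) e = x) :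
    ∃ v : F, v ≠ 0 ∧ ∀ x y, mul (α (mul v x)) y = mul (α (mul v y)) x := by
  have hBe : B e ≠ 0 := B.map_ne_zero_iff.mpr he
  set v := A.symm (B e)
  have hAα : ∀ x, A (α (mul v x)) = B x := fun x => hcdot.mul_right_cancel hBe <| by
    rw [hiso, hα, ← hiso, A.apply_symm_apply, hcomm]
  refine ⟨v, A.symm.map_ne_zero_iff.mpr hBe, fun x y => C.injective ?_⟩
  rw [← hiso, ← hiso, hAα, hAα, hcomm]

/-- Corollary 3.6 (Ganley's criterion for presemifields). -/
theorem ganley_criterion_presemifield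
    (F : Type*) [AddCommGroup F] [Fintype F]
    (star : F → F → F)
    (haddl : ∀ x y z : F, star (x + y) z = star x z + star y z)
    (haddr : ∀ x y z : F, star x (y + z) = star x y + star x z)
    (hnz : ∀ x y : F, star x y = 0 → x = 0 ∨ y = 0)
    (e : F) (he : e ≠ 0)
    (α : F → F) (hα : ∀ x : F, star (α x) e = x) :
    (∃ (cdot : F → F → F) (A B C : F ≃+ F),
      (∀ x y z : F, cdot (x + y) z = cdot x z + cdot y z) ∧
      (∀ x y z : F, cdot x (y + z) = cdot x y + cdot x z) ∧
      (∀ x y : F, cdot x y = 0 → x = 0 ∨ y = 0) ∧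
      (∀ x y : F, cdot x y = cdot y x) ∧
      (∀ x y : F, cdot (A x) (B y) = C (star x y))) ↔
    (∃ v : F, v ≠ 0 ∧ ∀ x y : F, star (α (star v x)) y = star (α (star v y)) x) := by
  have h : IsPresemifieldMul_s4 star := ⟨haddl, haddr, hnz⟩
  constructor
  · rintro ⟨cdot, A, B, C, hl, hr, hnz', hcomm, hiso⟩
    exact exists_ganley_vector_of_isotopic_comm ⟨hl, hr, hnz'⟩ hcomm A B C hiso he hα
  · rintro ⟨v, hv, hsym⟩
    let T := (h.mulLeftEquiv hv).trans (h.mulRightEquiv he).symm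
    have hT : ∀ x, T x = α (star v x) := fun x => (h.eq_mulRightEquiv_symm he hα _).symm
    obtain ⟨hl, hr, hnz'⟩ := h.precomp T
    refine ⟨fun x y => star (T x) y, T.symm, .refl F, .refl F, hl, hr, hnz', ?_, ?_⟩
    · simpa only [hT] using hsym
    · simp
end

section
/- Let p be a prime, 1 ≤ s < m, σ = p^s, F = F_{p^{2m}} the field of order p^{2m} with subfield L = F_{p^m}, and write x̄ := x^{p^m} for x ∈ F. Let l ∈ L*, μ ∈ F*, and define x ∘_A y := x y^σ + l x^σ y on F. Then the following compatibility condition holds — for all x, y ∈ F, if xy ∈ L and μ(x̄ ∘_A y) ∈ L then x = 0 or y = 0 — if and only if both: (i) −l ∉ {t^{σ−1} : t ∈ L*}, and (ii) μ^{p^m − 1} does not lie in {u^{σ+1} : u ∈ F*, u^{p^m + 1} = 1}, which is the subgroup of index gcd(p^m + 1, σ + 1) of the norm-one subgroup {u ∈ F* : u^{p^m+1} = 1}. -/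
/-! Only two features of `x ↦ x̄` matter: it is an involutive field automorphism fixing `l`, and
(Hilbert 90) every `u` with `u ū = 1` is `x̄ / x` for some `x ≠ 0`. When `xy ∈ L`, conjugation
multiplies `x̄ ∘_A y` by `(x / x̄) ^ (σ + 1)`. So a pair `x, y ≠ 0` breaking compatibility has
either `x̄ ∘_A y = 0`, and then `t = y / x̄ ∈ L*` has `t ^ (σ - 1) = -l`, or `μ̄ / μ = u ^ (σ + 1)`
for `u = x̄ / x` of norm one. Conversely such `t` or `u = x̄ / x` give the offending pairs `(1, t)`
and `(x, x̄)`. -/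

theorem IsCyclic.exists_pow_eq_of_pow_eq_one {G : Type*} [Group G] [Finite G] [IsCyclic G]
    {d e : ℕ} (hde : Nat.card G = d * e) {u : G} (hu : u ^ e = 1) : ∃ x : G, x ^ d = u := by
  obtain ⟨g, hg⟩ := IsCyclic.exists_generator (α := G)
  obtain ⟨k, rfl⟩ := mem_powers_iff_mem_zpowers.mpr (hg u)
  have he : 0 < e := Nat.pos_of_mul_pos_left (hde ▸ Nat.card_pos)
  have hdvd : d * e ∣ k * e := by
    rw [← hde, ← orderOf_eq_card_of_forall_mem_zpowers hg, orderOf_dvd_iff_pow_eq_one, pow_mul,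
      hu]
  obtain ⟨j, rfl⟩ := Nat.dvd_of_mul_dvd_mul_right he hdvd
  exact ⟨g ^ j, by rw [← pow_mul, mul_comm]⟩

/-- Hilbert 90 for the quadratic extension of `𝔽_q`, whose Galois conjugation is `x ↦ x ^ q`. -/
theorem FiniteField.exists_pow_eq_mul_of_mul_pow_eq_one {F : Type*} [Field F] [Fintype F]
    {q : ℕ} (hF : Fintype.card F = q * q) {u : F} (hu : u * u ^ q = 1) :
    ∃ x ≠ 0, x ^ q = u * x := by
  have hq : q ≠ 0 := by rintro rfl; simp at hF
  have hu0 : u ≠ 0 := left_ne_zero_of_mul_eq_one hu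
  have hunits : Nat.card Fˣ = (q - 1) * (q + 1) := by
    classical
    rw [Nat.card_eq_fintype_card, Fintype.card_units, hF]
    zify [Nat.one_le_iff_ne_zero.mpr hq, Nat.one_le_iff_ne_zero.mpr (mul_ne_zero hq hq)]
    ring
  have hnorm : Units.mk0 u hu0 ^ (q + 1) = 1 := Units.ext <| by simpa [pow_succ'] using hu
  obtain ⟨x, hx⟩ := IsCyclic.exists_pow_eq_of_pow_eq_one hunits hnorm
  refine ⟨x, x.ne_zero, ?_⟩
  rw [← pow_sub_one_mul hq, ← Units.val_pow_eq_pow_val, hx, Units.val_mk0]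

section Compatibility

variable {F : Type*} [Field F]

/-- The product `x ∘_A y` of the paper, for `σ` and `l` as there. -/
def twistedMul (σ : ℕ) (l x y : F) : F := x * y ^ σ + l * x ^ σ * y

/-- The compatibility condition, with the involution `τ` in the role of `x ↦ x̄`. -/
def IsCompatible (τ : F →+* F) (σ : ℕ) (l μ : F) : Prop :=
  ∀ x y : F, τ (x * y) = x * y →
    τ (μ * twistedMul σ l (τ x) y) = μ * twistedMul σ l (τ x) y → x = 0 ∨ y = 0

variable {τ : F →+* F} {σ : ℕ} {l μ : F}

theorem twistedMul_one_left_eq_zero (hσ : σ ≠ 0) {t : F} (ht : t ^ (σ - 1) = -l) :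
    twistedMul σ l 1 t = 0 := by
  rw [twistedMul, ← pow_sub_one_mul hσ, ht]
  ring

theorem twistedMul_self (x : F) : twistedMul σ l x x = (1 + l) * x ^ (σ + 1) := by
  rw [twistedMul]
  ring

theorem div_pow_sub_one_eq_neg_of_twistedMul_eq_zero (hσ : σ ≠ 0) {a y : F} (ha : a ≠ 0)
    (hy : y ≠ 0) (h : twistedMul σ l a y = 0) : (y / a) ^ (σ - 1) = -l := by
  rw [twistedMul] at h
  refine mul_right_cancel₀ (div_ne_zero hy ha) ?_
  rw [pow_sub_one_mul hσ, div_pow]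
  field_simp
  linear_combination h

theorem map_twistedMul_mul_pow (hτ : Function.Involutive τ) (hl : τ l = l) {x y : F}
    (hxy : τ (x * y) = x * y) :
    τ (twistedMul σ l (τ x) y) * τ x ^ (σ + 1) = x ^ (σ + 1) * twistedMul σ l (τ x) y := by
  rw [map_mul] at hxy
  have hxyσ : τ x ^ σ * τ y ^ σ = x ^ σ * y ^ σ := by rw [← mul_pow, ← mul_pow, hxy]
  simp only [twistedMul, map_add, map_mul, map_pow, hτ x, hl]
  linear_combination (x * τ x) * hxyσ + (l * x ^ σ * τ x ^ σ) * hxy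

theorem IsCompatible.not_exists_fixed_pow_sub_one_eq_neg (hC : IsCompatible τ σ l μ)
    (hσ : σ ≠ 0) : ¬ ∃ t : F, t ≠ 0 ∧ τ t = t ∧ t ^ (σ - 1) = -l := by
  rintro ⟨t, ht0, htτ, ht⟩
  have hA : twistedMul σ l (τ 1) t = 0 := by rw [map_one, twistedMul_one_left_eq_zero hσ ht]
  have := hC 1 t (by rw [one_mul, htτ]) (by rw [hA, mul_zero, map_zero])
  exact this.elim one_ne_zero ht0

theorem IsCompatible.not_exists_norm_eq_one (hC : IsCompatible τ σ l μ)
    (hτ : Function.Involutive τ) (hl : τ l = l)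
    (hilbert90 : ∀ u : F, u * τ u = 1 → ∃ x ≠ 0, τ x = u * x) :
    ¬ ∃ u : F, u ≠ 0 ∧ u * τ u = 1 ∧ τ μ = μ * u ^ (σ + 1) := by
  rintro ⟨u, -, hu, hμ⟩
  obtain ⟨x, hx0, hx⟩ := hilbert90 u hu
  have hfix : τ (μ * twistedMul σ l (τ x) (τ x)) = μ * twistedMul σ l (τ x) (τ x) := by
    rw [twistedMul_self, map_mul, map_mul, map_add, map_one, hl, map_pow, hτ x, hμ, hx]
    ring
  have := hC x (τ x) (by rw [map_mul, hτ x, mul_comm]) hfix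
  exact this.elim hx0 fun h => hx0 ((map_eq_zero τ).mp h)

theorem isCompatible_of_not_exists (hτ : Function.Involutive τ) (hl : τ l = l) (hσ : σ ≠ 0)
    (hfixed : ¬ ∃ t : F, t ≠ 0 ∧ τ t = t ∧ t ^ (σ - 1) = -l)
    (hnorm : ¬ ∃ u : F, u ≠ 0 ∧ u * τ u = 1 ∧ τ μ = μ * u ^ (σ + 1)) :
    IsCompatible τ σ l μ := by
  intro x y hxy hA
  by_contra! ⟨hx, hy⟩
  have hτx : τ x ≠ 0 := (map_ne_zero τ).mpr hx
  by_cases hA0 : twistedMul σ l (τ x) y = 0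
  · refine hfixed ⟨y / τ x, div_ne_zero hy hτx, ?_,
      div_pow_sub_one_eq_neg_of_twistedMul_eq_zero hσ hτx hy hA0⟩
    rw [map_mul] at hxy
    rw [map_div₀, hτ x, div_eq_div_iff hx hτx]
    linear_combination hxy
  · refine hnorm ⟨τ x / x, div_ne_zero hτx hx, ?_, ?_⟩
    · rw [map_div₀, hτ x]
      field_simp
    · have hrule := map_twistedMul_mul_pow (σ := σ) hτ hl hxy
      rw [map_mul] at hA
      have : τ μ * x ^ (σ + 1) = μ * τ x ^ (σ + 1) := by
        refine mul_right_cancel₀ hA0 ?_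
        linear_combination τ x ^ (σ + 1) * hA - τ μ * hrule
      rw [div_pow, ← mul_div_assoc, ← this, mul_div_cancel_right₀ _ (pow_ne_zero _ hx)]

theorem isCompatible_iff (hτ : Function.Involutive τ) (hl : τ l = l) (hσ : σ ≠ 0)
    (hilbert90 : ∀ u : F, u * τ u = 1 → ∃ x ≠ 0, τ x = u * x) :
    IsCompatible τ σ l μ ↔ (¬ ∃ t : F, t ≠ 0 ∧ τ t = t ∧ t ^ (σ - 1) = -l) ∧
      (¬ ∃ u : F, u ≠ 0 ∧ u * τ u = 1 ∧ τ μ = μ * u ^ (σ + 1)) :=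
  ⟨fun hC => ⟨hC.not_exists_fixed_pow_sub_one_eq_neg hσ,
      hC.not_exists_norm_eq_one hτ hl hilbert90⟩,
    fun h => isCompatible_of_not_exists hτ hl hσ h.1 h.2⟩

end Compatibility

theorem A_family_compatibility_general
    (p m s : ℕ) (hp : p.Prime)
    (F : Type*) [Field F] [Fintype F] (hcard : Fintype.card F = p ^ (2 * m))
    (l : F) (hlL : l ^ (p ^ m) = l)
    (μ : F) (hμ : μ ≠ 0) :
    (∀ x y : F,
        (x * y) ^ (p ^ m) = x * y →
        (μ * (x ^ (p ^ m) * y ^ (p ^ s) + l * (x ^ (p ^ m)) ^ (p ^ s) * y)) ^ (p ^ m)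
          = μ * (x ^ (p ^ m) * y ^ (p ^ s) + l * (x ^ (p ^ m)) ^ (p ^ s) * y) →
        x = 0 ∨ y = 0) ↔
      ((¬ ∃ t : F, t ≠ 0 ∧ t ^ (p ^ m) = t ∧ t ^ (p ^ s - 1) = -l) ∧
        (¬ ∃ u : F, u ≠ 0 ∧ u ^ (p ^ m + 1) = 1 ∧ μ ^ (p ^ m - 1) = u ^ (p ^ s + 1))) := by
  have := Fact.mk hp
  have := charP_of_card_eq_prime_pow hcard
  have hF : Fintype.card F = p ^ m * p ^ m := by rw [hcard, two_mul, pow_add]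
  have hq : p ^ m ≠ 0 := pow_ne_zero m hp.ne_zero
  have hτ : Function.Involutive (iterateFrobenius F p m) := fun x => by
    rw [iterateFrobenius_def, iterateFrobenius_def, ← pow_mul, ← hF, FiniteField.pow_card]
  have hnorm (u : F) : u ^ (p ^ m + 1) = 1 ↔ u * iterateFrobenius F p m u = 1 := by
    rw [pow_succ', iterateFrobenius_def]
  have hμ' (v : F) : μ ^ (p ^ m - 1) = v ↔ iterateFrobenius F p m μ = μ * v := by
    rw [iterateFrobenius_def, ← mul_pow_sub_one hq, mul_right_inj' hμ]
  simp only [hnorm, hμ']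
  -- the left side is `IsCompatible (iterateFrobenius F p m) (p ^ s) l μ` up to unfolding
  exact isCompatible_iff hτ hlL (pow_ne_zero s hp.ne_zero)
    fun u hu => FiniteField.exists_pow_eq_mul_of_mul_pow_eq_one hF hu

/-- Theorem 5.1: compatibility criterion defining the presemifields `A(p,m,s,l,μ)`.
Here `F` is the field of order `p^(2m)`, `L = {x : F | x^(p^m) = x}` is its subfield of
order `p^m`, `x̄ = x^(p^m)`, `σ = p^s`, and `x ∘_A y = x * y^σ + l * x^σ * y`. -/
theorem A_family_compatibility
    (p m s : ℕ) (hp : p.Prime) (hs : 1 ≤ s) (hsm : s < m)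
    (F : Type*) [Field F] [Fintype F] (hcard : Fintype.card F = p ^ (2 * m))
    (l : F) (hl0 : l ≠ 0) (hlL : l ^ (p ^ m) = l)
    (μ : F) (hμ : μ ≠ 0) :
    (∀ x y : F,
        (x * y) ^ (p ^ m) = x * y →
        (μ * (x ^ (p ^ m) * y ^ (p ^ s) + l * (x ^ (p ^ m)) ^ (p ^ s) * y)) ^ (p ^ m)
          = μ * (x ^ (p ^ m) * y ^ (p ^ s) + l * (x ^ (p ^ m)) ^ (p ^ s) * y) →
        x = 0 ∨ y = 0) ↔
      ((¬ ∃ t : F, t ≠ 0 ∧ t ^ (p ^ m) = t ∧ t ^ (p ^ s - 1) = -l) ∧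
        (¬ ∃ u : F, u ≠ 0 ∧ u ^ (p ^ m + 1) = 1 ∧ μ ^ (p ^ m - 1) = u ^ (p ^ s + 1))) :=
  A_family_compatibility_general p m s hp F hcard l hlL μ hμ
end

section
/- Let p be an odd prime, L = F_{p^m}, σ = p^s with 0 < s < m, l, n, N ∈ L* and v ∈ L, and let * denote the product X(p,m,s,v,l,n,N) on L × L. Then * has no zero divisors, i.e. (a,b)*(c,d) = (0,0) implies (a,b) = (0,0) or (c,d) = (0,0) (so X(p,m,s,v,l,n,N) is a presemifield), if and only if both: (i) −l ∉ L*^{σ−1}, and (ii) the polynomial t^{σ+1} − v t^σ − (v/N) t + 1/(nN) has no root t ∈ L. -/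
/-- The first coordinate of the product `X(p,m,s,v,l,n,N)`. -/
def Xh {L : Type*} [Field L] (σ : ℕ) (l n N v a b c d : L) : L :=
  (a * c ^ σ - n * N * b * d ^ σ) + l * (a ^ σ * c - n * N * b ^ σ * d)
    + n * v * ((N * a * d ^ σ - b * c ^ σ) + l * (a ^ σ * d - N * b ^ σ * c))

/-- The product `X(p,m,s,v,l,n,N)` on `L × L`. -/
def Xmul {L : Type*} [Field L] (σ : ℕ) (l n N v : L) (x y : L × L) : L × L :=
  (Xh σ l n N v x.1 x.2 y.1 y.2, x.1 * y.2 + x.2 * y.1)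

/-!
If `(a, b) * (c, d) = 0` with `a, c ≠ 0`, then `ad + bc = 0`, and since `σ` is odd also
`a^σ d^σ + b^σ c^σ = 0`. Eliminating `d` and `d^σ` factors `a^(σ+1)` times the first coordinate
as `F(a, b) · (a c^σ + l a^σ c)`, where `F` is the homogenised polynomial of condition (ii); the
second factor vanishes for some `c ≠ 0` exactly when `-l` is a `(σ-1)`-th power. The case `a = 0`
forces `c = 0` and reduces to the second factor again. Conversely, a witness of either condition
yields an explicit pair of zero divisors.
-/

section

variable {L : Type*} [Field L]

/-- `n N a^(q+1) f(b/a)` for the polynomial `f(t) = t^(q+1) - v t^q - (v/N) t + 1/(nN)`. -/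
def Xform (q : ℕ) (n N v a b : L) : L :=
  a ^ (q + 1) + n * N * b ^ (q + 1) - n * v * a ^ q * b - n * v * N * a * b ^ q

theorem Xform_eq_zero_iff {q : ℕ} {n N : L} (hn : n ≠ 0) (hN : N ≠ 0) (v : L) {a : L}
    (ha : a ≠ 0) (b : L) :
    Xform q n N v a b = 0 ↔
      (b / a) ^ (q + 1) - v * (b / a) ^ q - v / N * (b / a) + 1 / (n * N) = 0 := by
  have hscale : Xform q n N v a b = n * N * a ^ (q + 1) *
      ((b / a) ^ (q + 1) - v * (b / a) ^ q - v / N * (b / a) + 1 / (n * N)) := by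
    unfold Xform
    rw [div_pow, div_pow]
    field_simp
    ring
  rw [hscale]
  simp [hn, hN, ha]

theorem exists_pow_eq_neg_iff {q : ℕ} (hq : q ≠ 0) (l : L) :
    (∃ t : L, t ≠ 0 ∧ t ^ (q - 1) = -l) ↔
      ∃ x y : L, x ≠ 0 ∧ y ≠ 0 ∧ x * y ^ q + l * x ^ q * y = 0 := by
  obtain ⟨k, rfl⟩ : ∃ k, q = k + 1 := ⟨q - 1, by omega⟩
  rw [Nat.add_sub_cancel]
  constructor
  · rintro ⟨t, ht, htk⟩
    exact ⟨1, t, one_ne_zero, ht, by rw [pow_succ, htk]; ring⟩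
  · rintro ⟨x, y, hx, hy, h⟩
    refine ⟨y / x, div_ne_zero hy hx, ?_⟩
    have hyk : y ^ k = -l * x ^ k := by
      apply mul_left_cancel₀ (mul_ne_zero hx hy)
      rw [pow_succ, pow_succ] at h
      linear_combination h
    rw [div_pow, hyk]
    field_simp

variable (l n N v : L)

theorem Xmul_mk_zero_mk_zero {q : ℕ} (hq : q ≠ 0) (a c : L) :
    Xmul q l n N v (a, 0) (c, 0) = (a * c ^ q + l * a ^ q * c, 0) := by
  simp only [Xmul, Xh, zero_pow hq, Prod.mk.injEq]
  constructor <;> ring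

theorem Xmul_zero_mk_zero_mk {q : ℕ} (hq : q ≠ 0) (b d : L) :
    Xmul q l n N v (0, b) (0, d) = (-(n * N) * (b * d ^ q + l * b ^ q * d), 0) := by
  simp only [Xmul, Xh, zero_pow hq, Prod.mk.injEq]
  constructor <;> ring

theorem Xmul_one_mk_one_neg {q : ℕ} (hq : Odd q) (t : L) :
    Xmul q l n N v (1, t) (1, -t) = ((1 + l) * Xform q n N v 1 t, 0) := by
  simp only [Xmul, Xh, Xform, hq.neg_pow, one_pow, Prod.mk.injEq]
  constructor <;> ring

theorem pow_succ_mul_Xh {q : ℕ} (hq : Odd q) {a b c d : L} (had : a * d + b * c = 0) :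
    a ^ (q + 1) * Xh q l n N v a b c d = Xform q n N v a b * (a * c ^ q + l * a ^ q * c) := by
  have hadq : a ^ q * d ^ q + b ^ q * c ^ q = 0 := by
    rw [← mul_pow, ← mul_pow, eq_neg_of_add_eq_zero_left had, hq.neg_pow, neg_add_cancel]
  unfold Xh Xform
  linear_combination (n * v * l * a ^ q * a ^ q - l * n * N * a ^ q * b ^ q) * had
    + (n * v * N * a ^ 2 - n * N * a * b) * hadq

theorem Xmul_ne_zero {q : ℕ} (hq : Odd q) (hn : n ≠ 0) (hN : N ≠ 0)
    (hl : ∀ x y : L, x ≠ 0 → y ≠ 0 → x * y ^ q + l * x ^ q * y ≠ 0)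
    (hform : ∀ a b : L, a ≠ 0 → Xform q n N v a b ≠ 0)
    {x y : L × L} (hx : x ≠ 0) (hy : y ≠ 0) : Xmul q l n N v x y ≠ 0 := by
  obtain ⟨a, b⟩ := x
  obtain ⟨c, d⟩ := y
  have hq0 : q ≠ 0 := hq.pos.ne'
  intro hxy
  have had : a * d + b * c = 0 := congrArg Prod.snd hxy
  by_cases ha : a = 0
  · subst ha
    have hb : b ≠ 0 := by rintro rfl; exact hx rfl
    have hc : c = 0 := by simpa [hb] using had
    subst hc
    have hd : d ≠ 0 := by rintro rfl; exact hy rfl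
    rw [Xmul_zero_mk_zero_mk l n N v hq0] at hxy
    simpa [hn, hN, hl b d hb hd] using congrArg Prod.fst hxy
  · have hc : c ≠ 0 := by
      rintro rfl
      exact hy (Prod.ext rfl (by simpa [ha] using had))
    have hkey := pow_succ_mul_Xh l n N v hq had
    rw [show Xh q l n N v a b c d = 0 from congrArg Prod.fst hxy, mul_zero] at hkey
    exact mul_ne_zero (hform a b ha) (hl a c ha hc) hkey.symm

end

theorem X_family_presemifield_iff_general
    (p s : ℕ) (hodd : Odd p)
    (L : Type*) [Field L]
    (l n N : L) (hn : n ≠ 0) (hN : N ≠ 0) (v : L) :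
    (∀ x y : L × L, Xmul (p ^ s) l n N v x y = 0 → x = 0 ∨ y = 0) ↔
      ((¬ ∃ t : L, t ≠ 0 ∧ t ^ (p ^ s - 1) = -l) ∧
        ∀ t : L, t ^ (p ^ s + 1) - v * t ^ (p ^ s) - (v / N) * t + 1 / (n * N) ≠ 0) := by
  have hq : Odd (p ^ s) := hodd.pow
  rw [exists_pow_eq_neg_iff hq.pos.ne']
  constructor
  · intro hzd
    refine ⟨fun ⟨x, y, hx, hy, hxy⟩ => ?_, fun t ht => ?_⟩
    · have := hzd (x, 0) (y, 0) (by rw [Xmul_mk_zero_mk_zero l n N v hq.pos.ne', hxy]; rfl)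
      simp_all
    · have hform : Xform (p ^ s) n N v 1 t = 0 := by
        rwa [Xform_eq_zero_iff hn hN v one_ne_zero, div_one]
      have := hzd (1, t) (1, -t) (by rw [Xmul_one_mk_one_neg l n N v hq, hform, mul_zero]; rfl)
      simp_all
  · rintro ⟨hl, hroot⟩ x y hxy
    by_contra! hne
    exact Xmul_ne_zero l n N v hq hn hN (fun x y hx hy h => hl ⟨x, y, hx, hy, h⟩)
      (fun a b ha h => hroot (b / a) ((Xform_eq_zero_iff hn hN v ha b).1 h)) hne.1 hne.2 hxy

/-- Theorem 6.1: `X(p,m,s,v,l,n,N)` is a presemifield iff `-l ∉ L*^(σ-1)` and the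
polynomial `t^(σ+1) - v t^σ - (v/N) t + 1/(nN)` has no root in `L`. -/
theorem X_family_presemifield_iff
    (p m s : ℕ) (hp : p.Prime) (hodd : Odd p) (hs : 0 < s) (hsm : s < m)
    (L : Type*) [Field L] [Fintype L] (hcard : Fintype.card L = p ^ m)
    (l n N : L) (hl : l ≠ 0) (hn : n ≠ 0) (hN : N ≠ 0) (v : L) :
    (∀ x y : L × L, Xmul (p ^ s) l n N v x y = 0 → x = 0 ∨ y = 0) ↔
      ((¬ ∃ t : L, t ≠ 0 ∧ t ^ (p ^ s - 1) = -l) ∧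
        ∀ t : L, t ^ (p ^ s + 1) - v * t ^ (p ^ s) - (v / N) * t + 1 / (n * N) ≠ 0) :=
  X_family_presemifield_iff_general p s hodd L l n N hn hN v
end

section
/- Let p be an odd prime, L = F_{p^m}, σ = p^s with 0 < s < m, and suppose X(p,m,s,v,l,n,N) is a presemifield (l,n,N ∈ L*, v ∈ L). Then for any k_b, k_c ∈ L*, the products X(p,m,s,v,l,n,N) and X(p,m,s, v/k_b, l/k_c^{σ−1}, n k_b², N k_b^{σ−1}) are isotopic; and both are isotopic to X(p,m,m−s, v/N, 1/l, n N², 1/N), the analogous product in which σ = p^s is replaced by τ = p^{m−s}. In particular all of these are presemifields. -/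
/-- Products `mul, mul'` are isotopic: `mul' (A x) (B y) = C (mul x y)` for additive
bijections `A, B, C`. -/
def Isotopic {α : Type*} [AddCommGroup α] (mul mul' : α → α → α) : Prop :=
  ∃ A B C : α ≃+ α, ∀ x y : α, mul' (A x) (B y) = C (mul x y)

lemma Isotopic.eq_zero_or_eq_zero {α : Type*} [AddCommGroup α] {mul mul' : α → α → α}
    (h : Isotopic mul mul') (hmul : ∀ x y, mul x y = 0 → x = 0 ∨ y = 0) :
    ∀ x y, mul' x y = 0 → x = 0 ∨ y = 0 := by
  obtain ⟨A, B, C, hABC⟩ := h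
  intro x y hxy
  have h0 : mul (A.symm x) (B.symm y) = 0 := by
    rw [← C.map_eq_zero_iff, ← hABC, A.apply_symm_apply, B.apply_symm_apply, hxy]
  exact (hmul _ _ h0).imp A.symm.map_eq_zero_iff.mp B.symm.map_eq_zero_iff.mp

@[simp]
lemma AddEquiv.prodCongr_apply {M N M' N' : Type*} [AddZeroClass M] [AddZeroClass N]
    [AddZeroClass M'] [AddZeroClass N'] (f : M ≃+ M') (g : N ≃+ N') (x : M × N) :
    f.prodCongr g x = (f x.1, g x.2) :=
  rfl

@[simp]
lemma DistribMulAction.toAddEquiv₀_apply {α β : Type*} [GroupWithZero α] [AddMonoid β]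
    [DistribMulAction α β] (x : α) (hx : x ≠ 0) (b : β) :
    DistribMulAction.toAddEquiv₀ β x hx b = x • b :=
  rfl

section

variable {L : Type*} [Field L]

local notation "mulLeft" => DistribMulAction.toAddEquiv₀ L

lemma Xmul_isotopic_rescale (σ : ℕ) (hσ : σ ≠ 0) (l n N v : L) {kb kc : L}
    (hkb : kb ≠ 0) (hkc : kc ≠ 0) :
    Isotopic (Xmul σ l n N v)
      (Xmul σ (l / kc ^ (σ - 1)) (n * kb ^ 2) (N * kb ^ (σ - 1)) (v / kb)) := by
  obtain ⟨t, rfl⟩ := Nat.exists_eq_add_one_of_ne_zero hσ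
  refine ⟨.prodCongr (mulLeft (kb * kc) (by positivity)) (mulLeft kc hkc),
    .prodCongr (mulLeft kb hkb) (.refl L),
    .prodCongr (mulLeft (kb ^ (t + 2) * kc) (by positivity)) (mulLeft (kb * kc) (by positivity)),
    fun ⟨a, b⟩ ⟨c, d⟩ => ?_⟩
  simp only [Xmul, Xh, AddEquiv.prodCongr_apply, DistribMulAction.toAddEquiv₀_apply,
    AddEquiv.refl_apply, smul_eq_mul, Nat.add_sub_cancel, Prod.mk.injEq]
  constructor
  · field_simp
    ring
  · ring

lemma Xmul_isotopic_inverse_exponent (σ τ : ℕ) (φ : L ≃+* L) (hφ : ∀ x, φ x = x ^ σ)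
    (hστ : ∀ x : L, (x ^ σ) ^ τ = x) {l N : L} (hl : l ≠ 0) (hN : N ≠ 0) (n v : L) :
    Isotopic (Xmul σ l n N v) (Xmul τ (1 / l) (n * N ^ 2) (1 / N) (v / N)) := by
  refine ⟨.prodCongr φ φ, .prodCongr φ φ, .prodCongr (mulLeft l⁻¹ (inv_ne_zero hl)) φ,
    fun ⟨a, b⟩ ⟨c, d⟩ => ?_⟩
  simp only [Xmul, AddEquiv.prodCongr_apply, RingEquiv.coe_toAddEquiv, map_add, map_mul,
    DistribMulAction.toAddEquiv₀_apply, smul_eq_mul, Prod.mk.injEq, and_true]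
  simp only [Xh, hφ, hστ]
  field_simp
  ring

end

theorem X_family_isotopies_general
    (p m s : ℕ) (hp : p.Prime) (hsm : s < m)
    (L : Type*) [Field L] [Fintype L] (hcard : Fintype.card L = p ^ m)
    (l n N : L) (hl : l ≠ 0) (hN : N ≠ 0) (v : L)
    (hpre : ∀ x y : L × L, Xmul (p ^ s) l n N v x y = 0 → x = 0 ∨ y = 0)
    (kb kc : L) (hkb : kb ≠ 0) (hkc : kc ≠ 0) :
    Isotopic (Xmul (p ^ s) l n N v)
      (Xmul (p ^ s) (l / kc ^ (p ^ s - 1)) (n * kb ^ 2) (N * kb ^ (p ^ s - 1)) (v / kb)) ∧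
    Isotopic (Xmul (p ^ s) l n N v)
      (Xmul (p ^ (m - s)) (1 / l) (n * N ^ 2) (1 / N) (v / N)) ∧
    (∀ x y : L × L,
      Xmul (p ^ s) (l / kc ^ (p ^ s - 1)) (n * kb ^ 2) (N * kb ^ (p ^ s - 1)) (v / kb) x y = 0 →
        x = 0 ∨ y = 0) ∧
    (∀ x y : L × L,
      Xmul (p ^ (m - s)) (1 / l) (n * N ^ 2) (1 / N) (v / N) x y = 0 → x = 0 ∨ y = 0) := by
  have : Fact p.Prime := ⟨hp⟩
  have : CharP L p := charP_of_card_eq_prime_pow hcard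
  have hστ (x : L) : (x ^ p ^ s) ^ p ^ (m - s) = x := by
    rw [← pow_mul, ← pow_add, Nat.add_sub_cancel' hsm.le, ← hcard, FiniteField.pow_card]
  have iso₁ := Xmul_isotopic_rescale (p ^ s) (pow_ne_zero s hp.ne_zero) l n N v hkb hkc
  have iso₂ := Xmul_isotopic_inverse_exponent (p ^ s) (p ^ (m - s)) (iterateFrobeniusEquiv L p s)
    (iterateFrobeniusEquiv_def L p s) hστ hl hN n v
  exact ⟨iso₁, iso₂, iso₁.eq_zero_or_eq_zero hpre, iso₂.eq_zero_or_eq_zero hpre⟩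

/-- Lemma 6.3. -/
theorem X_family_isotopies
    (p m s : ℕ) (hp : p.Prime) (hodd : Odd p) (hs : 0 < s) (hsm : s < m)
    (L : Type*) [Field L] [Fintype L] (hcard : Fintype.card L = p ^ m)
    (l n N : L) (hl : l ≠ 0) (hn : n ≠ 0) (hN : N ≠ 0) (v : L)
    (hpre : ∀ x y : L × L, Xmul (p ^ s) l n N v x y = 0 → x = 0 ∨ y = 0)
    (kb kc : L) (hkb : kb ≠ 0) (hkc : kc ≠ 0) :
    Isotopic (Xmul (p ^ s) l n N v)
      (Xmul (p ^ s) (l / kc ^ (p ^ s - 1)) (n * kb ^ 2) (N * kb ^ (p ^ s - 1)) (v / kb)) ∧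
    Isotopic (Xmul (p ^ s) l n N v)
      (Xmul (p ^ (m - s)) (1 / l) (n * N ^ 2) (1 / N) (v / N)) ∧
    (∀ x y : L × L,
      Xmul (p ^ s) (l / kc ^ (p ^ s - 1)) (n * kb ^ 2) (N * kb ^ (p ^ s - 1)) (v / kb) x y = 0 →
        x = 0 ∨ y = 0) ∧
    (∀ x y : L × L,
      Xmul (p ^ (m - s)) (1 / l) (n * N ^ 2) (1 / N) (v / N) x y = 0 → x = 0 ∨ y = 0) :=
  X_family_isotopies_general p m s hp hsm L hcard l n N hl hN v hpre kb kc hkb hkc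
end

section
/- Let p be an odd prime, L = F_{p^m}, σ = p^s with 0 < s < m, and suppose X(p,m,s,v,l,n,N) is a presemifield (l,n,N ∈ L*, v ∈ L). Then X(p,m,s,v,l,n,N) is isotopic to at least one of: (i) a product B(p,m,s,l',n',N') = X(p,m,s,1,l',n',N') with l',n',N' ∈ L* such that −l' ∉ L*^{σ−1} and x^{σ+1} + (1 − 1/N')x + (1/n' − 1)/N' ≠ 0 for all x ∈ L; or (ii) a product C(p,m,s,l',R') = X(p,m,s,0,l',n',N') with l',n',N' ∈ L* such that −l' ∉ L*^{σ−1} and R' := −n'N' ∉ L*^{σ+1}. -/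
def IsPresemifieldMul_s8 {α : Type*} [Zero α] (mul : α → α → α) : Prop :=
  ∀ x y, mul x y = 0 → x = 0 ∨ y = 0

namespace Isotopic

variable {α : Type*} [AddCommGroup α]

theorem refl (mul : α → α → α) : Isotopic mul mul :=
  ⟨.refl α, .refl α, .refl α, fun _ _ => rfl⟩

theorem isPresemifieldMul {mul mul' : α → α → α} (h : Isotopic mul mul')
    (hmul : IsPresemifieldMul_s8 mul) : IsPresemifieldMul_s8 mul' := by
  obtain ⟨A, B, C, hABC⟩ := h
  intro x y hxy
  have hzero : mul (A.symm x) (B.symm y) = 0 :=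
    C.injective (by rw [← hABC, map_zero]; simpa using hxy)
  simpa using hmul _ _ hzero

end Isotopic

section Xmul

variable {L : Type*} [Field L] {σ : ℕ} {l n N v : L}

theorem Xh_ne_zero_of_isPresemifieldMul (hX : IsPresemifieldMul_s8 (Xmul σ l n N v))
    {a b c d : L} (hab : (a, b) ≠ 0) (hcd : (c, d) ≠ 0) (h : a * d + b * c = 0) :
    Xh σ l n N v a b c d ≠ 0 := fun h0 => by
  rcases hX (a, b) (c, d) (Prod.ext h0 h) with h | h <;> contradiction

theorem Xh_one_zero (hσ : σ ≠ 0) (t : L) :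
    Xh σ l n N v 1 0 t 0 = t * (t ^ (σ - 1) + l) := by
  rw [mul_add, mul_comm t, pow_sub_one_mul hσ]
  simp only [Xh, zero_pow hσ]
  ring

theorem Xh_conj_of_v_zero (hσ : Odd σ) (t : L) :
    Xh σ l n N 0 t 1 (-t) 1 = -(1 + l) * (t ^ (σ + 1) + n * N) := by
  simp only [Xh, hσ.neg_pow, one_pow]
  ring

theorem Xh_conj_of_v_one (hσ : Odd σ) (b : L) :
    Xh σ l n N 1 1 b 1 (-b) = (1 + l) * (n * N * b ^ σ * (b - 1) - n * b + 1) := by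
  simp only [Xh, hσ.neg_pow, one_pow]
  ring

theorem Xh_mul_snd (hσ : σ ≠ 0) (a b c d : L) :
    Xh σ l n N v a (v * b) c (v * d) = Xh σ l (n * v ^ 2) (N * v ^ (σ - 1)) 1 a b c d := by
  simp only [Xh, mul_pow, ← pow_sub_one_mul hσ v]
  ring

theorem isotopic_Xmul_one (hσ : σ ≠ 0) (hv : v ≠ 0) :
    Isotopic (Xmul σ l n N v) (Xmul σ l (n * v ^ 2) (N * v ^ (σ - 1)) 1) := by
  let S : L × L ≃+ L × L :=
    ((LinearEquiv.refl L L).prodCongr (.smulOfNeZero L L v⁻¹ (inv_ne_zero hv))).toAddEquiv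
  refine ⟨S, S, S, fun x y => Prod.ext ?_ ?_⟩
  · simp [S, Xmul, ← Xh_mul_snd hσ, mul_inv_cancel_left₀ hv]
  · simp [S, Xmul]
    ring

theorem not_exists_pow_sub_one_eq_neg_of_isPresemifieldMul (hσ : σ ≠ 0)
    (hX : IsPresemifieldMul_s8 (Xmul σ l n N v)) : ¬ ∃ t : L, t ≠ 0 ∧ t ^ (σ - 1) = -l := by
  rintro ⟨t, ht, htl⟩
  refine Xh_ne_zero_of_isPresemifieldMul hX (a := 1) (b := 0) (c := t) (d := 0)
    (by simp) (by simpa using ht) (by ring) ?_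
  rw [Xh_one_zero hσ, htl, neg_add_cancel, mul_zero]

theorem not_exists_pow_add_one_eq_neg_mul_of_isPresemifieldMul (hσ : Odd σ)
    (hX : IsPresemifieldMul_s8 (Xmul σ l n N 0)) : ¬ ∃ t : L, t ≠ 0 ∧ t ^ (σ + 1) = -(n * N) := by
  rintro ⟨t, -, htnN⟩
  refine Xh_ne_zero_of_isPresemifieldMul hX (a := t) (b := 1) (c := -t) (d := 1)
    (by simp) (by simp) (by ring) ?_
  rw [Xh_conj_of_v_zero hσ, htnN, neg_add_cancel, mul_zero]

theorem pow_add_one_add_ne_zero_of_isPresemifieldMul {p s : ℕ} [Fact p.Prime] [CharP L p]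
    (hodd : Odd p) (hn : n ≠ 0) (hN : N ≠ 0) (hX : IsPresemifieldMul_s8 (Xmul (p ^ s) l n N 1))
    (x : L) : x ^ (p ^ s + 1) + (1 - 1 / N) * x + (1 / n - 1) / N ≠ 0 := by
  intro hx
  refine Xh_ne_zero_of_isPresemifieldMul hX (a := 1) (b := x + 1) (c := 1) (d := -(x + 1))
    (by simp) (by simp) (by ring) ?_
  have hfrob : (x + 1) ^ p ^ s = x ^ p ^ s + 1 := by simp [add_pow_char_pow]
  have hcleared : n * N * (x ^ p ^ s * x) + n * (N - 1) * x + 1 - n = 0 := by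
    field_simp at hx
    linear_combination hx
  rw [Xh_conj_of_v_one hodd.pow, hfrob]
  linear_combination (1 + l) * hcleared

end Xmul

theorem X_family_isotopic_to_B_or_C_general
    (p m s : ℕ) (hp : p.Prime) (hodd : Odd p)
    (L : Type*) [Field L] [Fintype L] (hcard : Fintype.card L = p ^ m)
    (l n N : L) (hl : l ≠ 0) (hn : n ≠ 0) (hN : N ≠ 0) (v : L)
    (hpre : ∀ x y : L × L, Xmul (p ^ s) l n N v x y = 0 → x = 0 ∨ y = 0) :
    ∃ l' n' N' : L, l' ≠ 0 ∧ n' ≠ 0 ∧ N' ≠ 0 ∧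
      (((¬ ∃ t : L, t ≠ 0 ∧ t ^ (p ^ s - 1) = -l') ∧
          (∀ x : L, x ^ (p ^ s + 1) + (1 - 1 / N') * x + (1 / n' - 1) / N' ≠ 0) ∧
          Isotopic (Xmul (p ^ s) l n N v) (Xmul (p ^ s) l' n' N' 1)) ∨
        ((¬ ∃ t : L, t ≠ 0 ∧ t ^ (p ^ s - 1) = -l') ∧
          (¬ ∃ t : L, t ≠ 0 ∧ t ^ (p ^ s + 1) = -(n' * N')) ∧
          Isotopic (Xmul (p ^ s) l n N v) (Xmul (p ^ s) l' n' N' 0))) := by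
  have : Fact p.Prime := ⟨hp⟩
  have : CharP L p := charP_of_card_eq_prime_pow hcard
  have hσ : p ^ s ≠ 0 := pow_ne_zero _ hp.ne_zero
  have hl_not_pow := not_exists_pow_sub_one_eq_neg_of_isPresemifieldMul hσ hpre
  by_cases hv : v = 0
  · subst hv
    exact ⟨l, n, N, hl, hn, hN, .inr ⟨hl_not_pow,
      not_exists_pow_add_one_eq_neg_mul_of_isPresemifieldMul hodd.pow hpre, .refl _⟩⟩
  · have hiso : Isotopic (Xmul (p ^ s) l n N v) _ := isotopic_Xmul_one hσ hv
    have hn' : n * v ^ 2 ≠ 0 := mul_ne_zero hn (pow_ne_zero _ hv)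
    have hN' : N * v ^ (p ^ s - 1) ≠ 0 := mul_ne_zero hN (pow_ne_zero _ hv)
    exact ⟨l, _, _, hl, hn', hN', .inl ⟨hl_not_pow,
      pow_add_one_add_ne_zero_of_isPresemifieldMul hodd hn' hN' (hiso.isPresemifieldMul hpre),
      hiso⟩⟩

/-- Corollary 6.4: every presemifield `X(p,m,s,v,l,n,N)` is isotopic to a `B`-family
member (`v = 1`) or a `C`-family member (`v = 0`) with the stated normalizations. -/
theorem X_family_isotopic_to_B_or_C
    (p m s : ℕ) (hp : p.Prime) (hodd : Odd p) (hs : 0 < s) (hsm : s < m)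
    (L : Type*) [Field L] [Fintype L] (hcard : Fintype.card L = p ^ m)
    (l n N : L) (hl : l ≠ 0) (hn : n ≠ 0) (hN : N ≠ 0) (v : L)
    (hpre : ∀ x y : L × L, Xmul (p ^ s) l n N v x y = 0 → x = 0 ∨ y = 0) :
    ∃ l' n' N' : L, l' ≠ 0 ∧ n' ≠ 0 ∧ N' ≠ 0 ∧
      (((¬ ∃ t : L, t ≠ 0 ∧ t ^ (p ^ s - 1) = -l') ∧
          (∀ x : L, x ^ (p ^ s + 1) + (1 - 1 / N') * x + (1 / n' - 1) / N' ≠ 0) ∧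
          Isotopic (Xmul (p ^ s) l n N v) (Xmul (p ^ s) l' n' N' 1)) ∨
        ((¬ ∃ t : L, t ≠ 0 ∧ t ^ (p ^ s - 1) = -l') ∧
          (¬ ∃ t : L, t ≠ 0 ∧ t ^ (p ^ s + 1) = -(n' * N')) ∧
          Isotopic (Xmul (p ^ s) l n N v) (Xmul (p ^ s) l' n' N' 0))) :=
  X_family_isotopic_to_B_or_C_general p m s hp hodd L hcard l n N hl hn hN v hpre
end

section
/- Let p be an odd prime and s, m positive integers, and write v₂ for the 2-adic valuation on positive integers. If v₂(s) ≠ v₂(m) then gcd(p^m + 1, p^s + 1) = 2, whereas if v₂(s) = v₂(m) then gcd(p^m + 1, p^s + 1) = p^{gcd(m,s)} + 1. -/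
/-!
Write `d = gcd(m, s)`, `m = k d`, `s = l d` with `k, l` coprime, and `x = p^d`. Modulo
`g = gcd(x^k + 1, x^l + 1)` we have `x^k = x^l = -1`, hence `(x^2)^k = (x^2)^l = 1` and so
`x^2 = 1`. If `k` and `l` are both odd this forces `x = x^k = -1`, so `g ∣ x + 1 ∣ g`.
Otherwise one of them, say `l`, is even, so `-1 = x^l = 1` and `g ∣ 2 ∣ g`. Finally
`v₂(m) = v₂(s)` exactly when `k` and `l` are both odd, because they are not both even.
-/

section PowEqNegOne

variable {M : Type*} [Monoid M] [HasDistribNeg M] {y : M} {k l : ℕ}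

lemma sq_eq_one_of_pow_eq_neg_one (hkl : k.Coprime l) (hk : y ^ k = -1) (hl : y ^ l = -1) :
    y ^ 2 = 1 :=
  (pow_eq_one_iff_of_coprime hkl).mp
    ⟨by rw [pow_right_comm, hk, neg_one_sq], by rw [pow_right_comm, hl, neg_one_sq]⟩

lemma eq_neg_one_of_sq_eq_one_of_odd (hy : y ^ 2 = 1) (hk : Odd k) (hyk : y ^ k = -1) :
    y = -1 := by
  obtain ⟨u, rfl⟩ := hk
  rwa [pow_succ, pow_mul, hy, one_pow, one_mul] at hyk

lemma one_eq_neg_one_of_sq_eq_one_of_even (hy : y ^ 2 = 1) (hl : Even l) (hyl : y ^ l = -1) :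
    (1 : M) = -1 := by
  obtain ⟨u, rfl⟩ := hl
  rwa [← two_mul, pow_mul, hy, one_pow] at hyl

end PowEqNegOne

namespace Nat

lemma natCast_pow_eq_neg_one_of_dvd {g x k : ℕ} (h : g ∣ x ^ k + 1) : (x : ZMod g) ^ k = -1 := by
  rw [← ZMod.natCast_eq_zero_iff] at h
  push_cast at h
  exact eq_neg_of_add_eq_zero_left h

variable {x k l : ℕ}

lemma sq_eq_one_mod_gcd_pow_add_one (hkl : k.Coprime l) :
    (x : ZMod (gcd (x ^ k + 1) (x ^ l + 1))) ^ 2 = 1 :=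
  sq_eq_one_of_pow_eq_neg_one hkl
    (natCast_pow_eq_neg_one_of_dvd (gcd_dvd_left (x ^ k + 1) (x ^ l + 1)))
    (natCast_pow_eq_neg_one_of_dvd (gcd_dvd_right (x ^ k + 1) (x ^ l + 1)))

lemma gcd_pow_add_one_of_odd (hkl : k.Coprime l) (hk : Odd k) (hl : Odd l) :
    gcd (x ^ k + 1) (x ^ l + 1) = x + 1 := by
  refine dvd_antisymm ?_ (dvd_gcd ?_ ?_)
  · have hx := eq_neg_one_of_sq_eq_one_of_odd (sq_eq_one_mod_gcd_pow_add_one hkl) hk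
      (natCast_pow_eq_neg_one_of_dvd (gcd_dvd_left (x ^ k + 1) (x ^ l + 1)))
    rw [← ZMod.natCast_eq_zero_iff, cast_add, hx, cast_one, neg_add_cancel]
  · simpa only [one_pow] using hk.nat_add_dvd_pow_add_pow x 1
  · simpa only [one_pow] using hl.nat_add_dvd_pow_add_pow x 1

lemma gcd_pow_add_one_of_even (hx : Odd x) (hkl : k.Coprime l) (hl : Even l) :
    gcd (x ^ k + 1) (x ^ l + 1) = 2 := by
  refine dvd_antisymm ?_ (dvd_gcd (hx.pow.add_one).two_dvd (hx.pow.add_one).two_dvd)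
  have h := one_eq_neg_one_of_sq_eq_one_of_even (sq_eq_one_mod_gcd_pow_add_one hkl) hl
    (natCast_pow_eq_neg_one_of_dvd (gcd_dvd_right (x ^ k + 1) (x ^ l + 1)))
  rw [← ZMod.natCast_eq_zero_iff, cast_ofNat]
  linear_combination h

lemma padicValNat_two_mul_eq_iff_odd {d : ℕ} (hkl : k.Coprime l) (hk : k ≠ 0) (hl : l ≠ 0)
    (hd : d ≠ 0) : padicValNat 2 (k * d) = padicValNat 2 (l * d) ↔ Odd k ∧ Odd l := by
  have not_both_even : ¬(padicValNat 2 k ≠ 0 ∧ padicValNat 2 l ≠ 0) := fun ⟨h2k, h2l⟩ =>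
    not_coprime_of_dvd_of_dvd one_lt_two ((dvd_iff_padicValNat_ne_zero hk).2 h2k)
      ((dvd_iff_padicValNat_ne_zero hl).2 h2l) hkl
  rw [padicValNat.mul hk hd, padicValNat.mul hl hd, add_left_inj, ← not_even_iff_odd,
    ← not_even_iff_odd, even_iff_two_dvd, even_iff_two_dvd, dvd_iff_padicValNat_ne_zero hk,
    dvd_iff_padicValNat_ne_zero hl]
  omega

end Nat

theorem gcd_pow_add_one_general
    (p s m : ℕ) (hodd : Odd p) (hs : 0 < s) (hm : 0 < m) :
    (padicValNat 2 s ≠ padicValNat 2 m → Nat.gcd (p ^ m + 1) (p ^ s + 1) = 2) ∧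
    (padicValNat 2 s = padicValNat 2 m →
      Nat.gcd (p ^ m + 1) (p ^ s + 1) = p ^ Nat.gcd m s + 1) := by
  obtain ⟨d, k, l, hd, hkl, rfl, rfl⟩ := Nat.exists_coprime' (Nat.gcd_pos_of_pos_left s hm)
  have hk : k ≠ 0 := by rintro rfl; simp at hm
  have hl : l ≠ 0 := by rintro rfl; simp at hs
  rw [Ne, Nat.gcd_mul_right, hkl.gcd_eq_one, one_mul, pow_mul', pow_mul' p l,
    Nat.padicValNat_two_mul_eq_iff_odd hkl.symm hl hk hd.ne', and_comm (a := Odd l)]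
  refine ⟨fun not_both_odd => ?_, fun ⟨hk_odd, hl_odd⟩ =>
    Nat.gcd_pow_add_one_of_odd hkl hk_odd hl_odd⟩
  rcases Nat.even_or_odd l with hl_even | hl_odd
  · exact Nat.gcd_pow_add_one_of_even hodd.pow hkl hl_even
  · have hk_even : Even k := Nat.not_odd_iff_even.mp fun hk_odd => not_both_odd ⟨hk_odd, hl_odd⟩
    rw [Nat.gcd_comm]
    exact Nat.gcd_pow_add_one_of_even hodd.pow hkl.symm hk_even

/-- Lemma 7.3: for odd `p`, `gcd(p^m+1, p^s+1) = 2` if `v₂(s) ≠ v₂(m)`, and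
`gcd(p^m+1, p^s+1) = p^gcd(m,s) + 1` if `v₂(s) = v₂(m)`. -/
theorem gcd_pow_add_one
    (p s m : ℕ) (hp : p.Prime) (hodd : Odd p) (hs : 0 < s) (hm : 0 < m) :
    (padicValNat 2 s ≠ padicValNat 2 m → Nat.gcd (p ^ m + 1) (p ^ s + 1) = 2) ∧
    (padicValNat 2 s = padicValNat 2 m →
      Nat.gcd (p ^ m + 1) (p ^ s + 1) = p ^ Nat.gcd m s + 1) :=
  gcd_pow_add_one_general p s m hodd hs hm
end

section
/- Let p be an odd prime, s, m positive integers, d = gcd(s,m), L = F_{p^m}, σ = p^s, and write v₂ for the 2-adic valuation. (i) If v₂(d) = v₂(m), then gcd(2s, m) = d, gcd(p^m − 1, p^s + 1) = 2, and L*^{σ−1} ∩ L*^{σ+1} = L*^{σ²−1}. (ii) If v₂(d) < v₂(m), then gcd(2s, m) = 2d, gcd(p^m − 1, p^s + 1) = p^d + 1, and L*^{σ²−1} has index 2 in the group L*^{σ−1} ∩ L*^{σ+1}. -/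
/-!
`L*` is cyclic of order `n = p^m - 1`, and in a finite abelian group `G^k = G^{gcd(n, k)}`.
Since `gcd(p^m - 1, p^k - 1) = p^{gcd(k, m)} - 1` and `gcd(2s, m) = d · gcd(2, m/d)`, everything
is decided by the parity of `m/d`, which is what the 2-adic valuations detect.
If `m/d` is odd, `L*^{σ-1} = L*^{p^d-1} = L*^{σ²-1}`, and this lies in `L*^{σ+1} = L*^2`.
If `m/d` is even, then `s/d` is odd, so `p^s + 1 ≡ p^d + 1 (mod p^{2d} - 1)` and
`gcd(p^m - 1, p^s + 1) = p^d + 1`. With `q = p^d` the three groups are `L*^{q-1}`, `L*^{q+1}`,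
`L*^{q²-1}`, of orders `(q+1)w`, `(q-1)w`, `w`; in a cyclic group the order of an intersection
is the gcd of the orders, here `2w`.
-/

/-- The subgroup `L*^k = {t^k : t ∈ L*}` of the group of units of `L`. -/
def powSubgroup (L : Type*) [Field L] (k : ℕ) : Subgroup Lˣ :=
  (powMonoidHom k : Lˣ →* Lˣ).range

namespace Nat

theorem gcd_two_mul (s m : ℕ) : gcd (2 * s) m = gcd s m * gcd 2 (m / gcd s m) := by
  rcases Nat.eq_zero_or_pos (gcd s m) with h | h
  · obtain ⟨rfl, rfl⟩ := Nat.gcd_eq_zero_iff.mp h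
    simp
  · calc gcd (2 * s) m = gcd (2 * (s / gcd s m) * gcd s m) (m / gcd s m * gcd s m) := by
          rw [mul_assoc, Nat.div_mul_cancel (gcd_dvd_left s m),
            Nat.div_mul_cancel (gcd_dvd_right s m)]
      _ = gcd s m * gcd 2 (m / gcd s m) := by
          rw [Nat.gcd_mul_right, (coprime_div_gcd_div_gcd h).gcd_mul_right_cancel, mul_comm]

theorem gcd_two_mul_of_odd_div_gcd {s m : ℕ} (h : Odd (m / gcd s m)) :
    gcd (2 * s) m = gcd s m := by
  rw [gcd_two_mul, coprime_two_left.mpr h, mul_one]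

theorem gcd_two_mul_of_even_div_gcd {s m : ℕ} (h : Even (m / gcd s m)) :
    gcd (2 * s) m = 2 * gcd s m := by
  rw [gcd_two_mul, gcd_eq_left (even_iff_two_dvd.mp h), mul_comm]

theorem odd_div_gcd_of_padicValNat_eq {s m : ℕ} (hm : 0 < m)
    (h : padicValNat 2 (gcd s m) = padicValNat 2 m) : Odd (m / gcd s m) := by
  have hv : padicValNat 2 (m / gcd s m) = 0 := by
    rw [padicValNat.div_of_dvd (gcd_dvd_right s m), h, Nat.sub_self]
  have hpos : 0 < m / gcd s m := Nat.div_pos (gcd_le_right s hm) (gcd_pos_of_pos_right s hm)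
  exact Nat.odd_iff.mpr (by rcases padicValNat.eq_zero_iff.mp hv with h | h | h <;> omega)

theorem even_div_gcd_of_padicValNat_lt {s m : ℕ}
    (h : padicValNat 2 (gcd s m) < padicValNat 2 m) : Even (m / gcd s m) := by
  have hv : 1 ≤ padicValNat 2 (m / gcd s m) := by
    rw [padicValNat.div_of_dvd (gcd_dvd_right s m)]; omega
  exact even_iff_two_dvd.mpr (dvd_of_one_le_padicValNat hv)

theorem odd_div_gcd_of_even_div_gcd {s m : ℕ} (hs : 0 < s) (h : Even (m / gcd s m)) :
    Odd (s / gcd s m) := by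
  refine Nat.not_even_iff_odd.mp fun hs' => ?_
  exact Nat.not_coprime_of_dvd_of_dvd one_lt_two hs'.two_dvd h.two_dvd
    (coprime_div_gcd_div_gcd (gcd_pos_of_pos_left m hs))

theorem pow_add_one_dvd_pow_two_mul_sub_one (q s : ℕ) : q ^ s + 1 ∣ q ^ (2 * s) - 1 := by
  rw [pow_mul', ← one_pow 2, Nat.sq_sub_sq, one_pow]
  exact dvd_mul_right _ _

theorem gcd_pow_sub_one_pow_add_one_dvd (q m s : ℕ) :
    gcd (q ^ m - 1) (q ^ s + 1) ∣ q ^ gcd (2 * s) m - 1 := by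
  rw [gcd_comm (2 * s), ← pow_sub_one_gcd_pow_sub_one]
  exact gcd_dvd_gcd_of_dvd_right _ (pow_add_one_dvd_pow_two_mul_sub_one q s)

theorem gcd_pow_sub_one_pow_add_one_of_odd_div_gcd {q s m : ℕ} (hq : Odd q)
    (h : Odd (m / gcd s m)) :
    gcd (q ^ m - 1) (q ^ s + 1) = 2 := by
  apply dvd_antisymm
  · have hsub : gcd (q ^ m - 1) (q ^ s + 1) ∣ q ^ s - 1 :=
      (gcd_two_mul_of_odd_div_gcd h ▸ gcd_pow_sub_one_pow_add_one_dvd q m s).trans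
        (pow_sub_one_dvd_pow_sub_one q (gcd_dvd_left s m))
    have h2 := Nat.dvd_sub (gcd_dvd_right _ _) hsub
    rwa [show q ^ s + 1 - (q ^ s - 1) = 2 by have := hq.pow (n := s).pos; omega] at h2
  · exact dvd_gcd (Nat.Odd.sub_odd hq.pow odd_one).two_dvd (hq.pow.add_odd odd_one).two_dvd

theorem dvd_pow_add_one_of_dvd_pow_two_mul_sub_one {q d k g : ℕ} (hq : 0 < q) (hk : Odd k)
    (h1 : g ∣ q ^ (2 * d) - 1) (h2 : g ∣ q ^ (d * k) + 1) : g ∣ q ^ d + 1 := by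
  obtain ⟨j, rfl⟩ := hk
  obtain ⟨c, hc⟩ := Nat.exists_eq_add_one.mpr (pow_pos hq (2 * d * j))
  have h3 : g ∣ q ^ d * c := by
    have := (h1.trans (pow_sub_one_dvd_pow_sub_one q (dvd_mul_right _ j))).mul_left (q ^ d)
    rwa [hc, Nat.add_sub_cancel] at this
  have key : q ^ (d * (2 * j + 1)) + 1 = q ^ d * c + (q ^ d + 1) := by
    rw [show d * (2 * j + 1) = d + 2 * d * j by ring, pow_add, hc]; ring
  exact (Nat.dvd_add_right h3).mp (key ▸ h2)

theorem gcd_pow_sub_one_pow_add_one_of_even_div_gcd {q s m : ℕ} (hq : 0 < q) (hs : 0 < s)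
    (h : Even (m / gcd s m)) : gcd (q ^ m - 1) (q ^ s + 1) = q ^ gcd s m + 1 := by
  have h2s := gcd_two_mul_of_even_div_gcd h
  have hs' := Nat.mul_div_cancel' (gcd_dvd_left s m)
  have hk := odd_div_gcd_of_even_div_gcd hs h
  apply dvd_antisymm
  · refine dvd_pow_add_one_of_dvd_pow_two_mul_sub_one hq hk
      (h2s ▸ gcd_pow_sub_one_pow_add_one_dvd q m s) ?_
    rw [hs']
    exact gcd_dvd_right _ _
  · refine dvd_gcd ((pow_add_one_dvd_pow_two_mul_sub_one q _).trans
      (pow_sub_one_dvd_pow_sub_one q (h2s ▸ gcd_dvd_right _ _))) ?_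
    have hpow : q ^ s = (q ^ gcd s m) ^ (s / gcd s m) := by rw [← pow_mul, hs']
    simpa [hpow] using hk.nat_add_dvd_pow_add_pow (q ^ gcd s m) 1

theorem gcd_add_one_sub_one_of_odd {q : ℕ} (hq : Odd q) : gcd (q + 1) (q - 1) = 2 := by
  obtain ⟨t, rfl⟩ := hq
  rw [show 2 * t + 1 + 1 = 2 * (t + 1) by ring, show 2 * t + 1 - 1 = 2 * t by omega,
    Nat.gcd_mul_left]
  simp

end Nat

section PowMonoidHom

variable {G : Type*} [CommGroup G]

theorem range_powMonoidHom_le_of_dvd {a b : ℕ} (h : a ∣ b) :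
    (powMonoidHom b : G →* G).range ≤ (powMonoidHom a).range := by
  rintro _ ⟨x, rfl⟩
  obtain ⟨c, rfl⟩ := h
  exact ⟨x ^ c, by simp [← pow_mul, mul_comm]⟩

theorem ker_powMonoidHom_inf_ker_powMonoidHom (a b : ℕ) :
    (powMonoidHom a : G →* G).ker ⊓ (powMonoidHom b).ker = (powMonoidHom (a.gcd b)).ker := by
  ext x
  simp only [Subgroup.mem_inf, MonoidHom.mem_ker, powMonoidHom_apply,
    ← orderOf_dvd_iff_pow_eq_one, Nat.dvd_gcd_iff]

theorem range_powMonoidHom_gcd_card [Finite G] (k : ℕ) :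
    (powMonoidHom ((Nat.card G).gcd k) : G →* G).range = (powMonoidHom k).range := by
  refine le_antisymm ?_ (range_powMonoidHom_le_of_dvd (Nat.gcd_dvd_right _ _))
  rintro _ ⟨x, rfl⟩
  refine ⟨x ^ (Nat.card G).gcdB k, ?_⟩
  have hx : x ^ (Nat.card G : ℤ) = 1 := by rw [zpow_natCast, pow_card_eq_one']
  rw [powMonoidHom_apply, powMonoidHom_apply, ← zpow_natCast, ← zpow_natCast, ← zpow_mul,
    Nat.gcd_eq_gcd_ab, zpow_add, zpow_mul x (Nat.card G : ℤ), hx, one_zpow, one_mul, mul_comm]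

namespace IsCyclic

variable [IsCyclic G] [Finite G]

theorem ker_powMonoidHom_card (H : Subgroup G) :
    (powMonoidHom (Nat.card H) : G →* G).ker = H := by
  refine (Subgroup.eq_of_le_of_card_ge (fun x hx => ?_) ?_).symm
  · have := congrArg Subtype.val (pow_card_eq_one' (G := H) (x := ⟨x, hx⟩))
    rwa [Subgroup.coe_pow, Subgroup.coe_one] at this
  · rw [card_powMonoidHom_ker, Nat.gcd_eq_right H.card_subgroup_dvd_card]

theorem card_inf (H K : Subgroup G) : Nat.card ↥(H ⊓ K) = (Nat.card H).gcd (Nat.card K) := by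
  conv_lhs => rw [← ker_powMonoidHom_card H, ← ker_powMonoidHom_card K]
  rw [ker_powMonoidHom_inf_ker_powMonoidHom, card_powMonoidHom_ker,
    Nat.gcd_eq_right ((Nat.gcd_dvd_left _ _).trans H.card_subgroup_dvd_card)]

theorem card_range_powMonoidHom_of_mul_eq {k c : ℕ} (h : k * c = Nat.card G) :
    Nat.card (powMonoidHom k : G →* G).range = c := by
  have hk : k ≠ 0 := by rintro rfl; rw [zero_mul] at h; exact Nat.card_pos.ne h
  rw [card_powMonoidHom_range, ← h, Nat.gcd_mul_right_left, Nat.mul_div_cancel_left _ hk.bot_lt]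

theorem relIndex_range_powMonoidHom_sq_sub_one {q : ℕ} (hq : Odd q)
    (h : q ^ 2 - 1 ∣ Nat.card G) :
    (powMonoidHom (q ^ 2 - 1) : G →* G).range.relIndex
      ((powMonoidHom (q - 1)).range ⊓ (powMonoidHom (q + 1)).range) = 2 := by
  obtain ⟨w, hw⟩ := h
  have hsq : q ^ 2 - 1 = (q + 1) * (q - 1) := by simpa using Nat.sq_sub_sq q 1
  have hw0 : 0 < w := Nat.pos_of_ne_zero (by rintro rfl; exact Nat.card_pos.ne' hw)
  have hle : (powMonoidHom (q ^ 2 - 1) : G →* G).range ≤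
      (powMonoidHom (q - 1)).range ⊓ (powMonoidHom (q + 1)).range :=
    le_inf (range_powMonoidHom_le_of_dvd (hsq ▸ dvd_mul_left _ _))
      (range_powMonoidHom_le_of_dvd (hsq ▸ dvd_mul_right _ _))
  have hinf : Nat.card ↥((powMonoidHom (q - 1) : G →* G).range ⊓ (powMonoidHom (q + 1)).range)
      = 2 * w := by
    rw [card_inf, card_range_powMonoidHom_of_mul_eq (c := (q + 1) * w) (by rw [hw, hsq]; ring),
      card_range_powMonoidHom_of_mul_eq (c := (q - 1) * w) (by rw [hw, hsq]; ring),
      Nat.gcd_mul_right, Nat.gcd_add_one_sub_one_of_odd hq]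
  have hmul := Subgroup.relIndex_mul_relIndex ⊥ _ _ bot_le hle
  rw [Subgroup.relIndex_bot_left, Subgroup.relIndex_bot_left, hinf,
    card_range_powMonoidHom_of_mul_eq hw.symm] at hmul
  exact Nat.eq_of_mul_eq_mul_left hw0 (hmul.trans (mul_comm _ _))

end IsCyclic

end PowMonoidHom

theorem powSubgroup_eq_range_powMonoidHom_gcd (L : Type*) [Field L] [Finite L] (k : ℕ) :
    powSubgroup L k = (powMonoidHom ((Nat.card L - 1).gcd k)).range := by
  rw [powSubgroup, ← range_powMonoidHom_gcd_card, Nat.card_units]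

theorem power_subgroups_lemma_general
    (p s m : ℕ) (hodd : Odd p) (hs : 0 < s) (hm : 0 < m)
    (L : Type*) [Field L] [Fintype L] (hcard : Fintype.card L = p ^ m) :
    (padicValNat 2 (Nat.gcd s m) = padicValNat 2 m →
      Nat.gcd (2 * s) m = Nat.gcd s m ∧
      Nat.gcd (p ^ m - 1) (p ^ s + 1) = 2 ∧
      powSubgroup L (p ^ s - 1) ⊓ powSubgroup L (p ^ s + 1)
        = powSubgroup L (p ^ (2 * s) - 1)) ∧
    (padicValNat 2 (Nat.gcd s m) < padicValNat 2 m →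
      Nat.gcd (2 * s) m = 2 * Nat.gcd s m ∧
      Nat.gcd (p ^ m - 1) (p ^ s + 1) = p ^ Nat.gcd s m + 1 ∧
      Subgroup.relIndex (powSubgroup L (p ^ (2 * s) - 1))
        (powSubgroup L (p ^ s - 1) ⊓ powSubgroup L (p ^ s + 1)) = 2) := by
  have hn : Nat.card L - 1 = p ^ m - 1 := by rw [Nat.card_eq_fintype_card, hcard]
  have hsub (k : ℕ) : powSubgroup L (p ^ k - 1) = (powMonoidHom (p ^ Nat.gcd k m - 1)).range := by
    rw [powSubgroup_eq_range_powMonoidHom_gcd, hn, Nat.pow_sub_one_gcd_pow_sub_one, Nat.gcd_comm]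
  have hadd : powSubgroup L (p ^ s + 1)
      = (powMonoidHom (Nat.gcd (p ^ m - 1) (p ^ s + 1))).range := by
    rw [powSubgroup_eq_range_powMonoidHom_gcd, hn]
  refine ⟨fun h => ?_, fun h => ?_⟩
  · have hmd := Nat.odd_div_gcd_of_padicValNat_eq hm h
    have hgcd := Nat.gcd_pow_sub_one_pow_add_one_of_odd_div_gcd hodd hmd
    refine ⟨Nat.gcd_two_mul_of_odd_div_gcd hmd, hgcd, ?_⟩
    rw [hsub, hsub, hadd, hgcd, Nat.gcd_two_mul_of_odd_div_gcd hmd]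
    exact inf_eq_left.mpr (range_powMonoidHom_le_of_dvd (Nat.Odd.sub_odd hodd.pow odd_one).two_dvd)
  · have hmd := Nat.even_div_gcd_of_padicValNat_lt h
    have hgcd := Nat.gcd_pow_sub_one_pow_add_one_of_even_div_gcd hodd.pos hs hmd
    refine ⟨Nat.gcd_two_mul_of_even_div_gcd hmd, hgcd, ?_⟩
    rw [hsub, hsub, hadd, hgcd, Nat.gcd_two_mul_of_even_div_gcd hmd, pow_mul']
    apply IsCyclic.relIndex_range_powMonoidHom_sq_sub_one hodd.pow
    rw [Nat.card_units, hn, ← pow_mul', ← Nat.gcd_two_mul_of_even_div_gcd hmd]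
    exact Nat.pow_sub_one_dvd_pow_sub_one p (Nat.gcd_dvd_right _ _)

/-- Lemma 7.4. -/
theorem power_subgroups_lemma
    (p s m : ℕ) (hp : p.Prime) (hodd : Odd p) (hs : 0 < s) (hm : 0 < m)
    (L : Type*) [Field L] [Fintype L] (hcard : Fintype.card L = p ^ m) :
    (padicValNat 2 (Nat.gcd s m) = padicValNat 2 m →
      Nat.gcd (2 * s) m = Nat.gcd s m ∧
      Nat.gcd (p ^ m - 1) (p ^ s + 1) = 2 ∧
      powSubgroup L (p ^ s - 1) ⊓ powSubgroup L (p ^ s + 1)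
        = powSubgroup L (p ^ (2 * s) - 1)) ∧
    (padicValNat 2 (Nat.gcd s m) < padicValNat 2 m →
      Nat.gcd (2 * s) m = 2 * Nat.gcd s m ∧
      Nat.gcd (p ^ m - 1) (p ^ s + 1) = p ^ Nat.gcd s m + 1 ∧
      Subgroup.relIndex (powSubgroup L (p ^ (2 * s) - 1))
        (powSubgroup L (p ^ s - 1) ⊓ powSubgroup L (p ^ s + 1)) = 2) :=
  power_subgroups_lemma_general p s m hodd hs hm L hcard
end

section
/- Let p be an odd prime, L = F_{p^m}, n ∈ L a non-square, σ = p^s with 0 ≤ s < m, and d = gcd(s,m) (with d = m when s = 0). Then: (i) −n^{(σ−1)/2} ∈ L*^{σ−1} if and only if both s/d and m/d are odd; (ii) n^{(σ−1)/2} ∈ L*^{σ−1} if and only if s/d is even (in which case m/d is necessarily odd). -/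
/-!
Let `q = p ^ m`, `k = p ^ s - 1` and `c = gcd (q - 1, k) = p ^ d - 1`. In the cyclic group `L*`
an element `x` is a `k`-th power iff `x ^ ((q - 1) / c) = 1`. For a non-square `n` Euler's
criterion gives `n ^ ((q - 1) / 2) = -1`, hence `(n ^ (k / 2)) ^ ((q - 1) / c) = (-1) ^ (k / c)`.
Finally `k / c = 1 + p ^ d + ⋯ + p ^ (s - d)` has `s / d` odd terms, so it has the parity of
`s / d`, and likewise `(q - 1) / c` has the parity of `m / d`.
-/

theorem IsCyclic.range_powMonoidHom_eq_ker {G : Type*} [CommGroup G] [IsCyclic G] [Finite G]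
    (k : ℕ) :
    (powMonoidHom k : G →* G).range = (powMonoidHom (Nat.card G / (Nat.card G).gcd k)).ker := by
  set N := Nat.card G
  refine Subgroup.eq_of_le_of_card_ge ?_ ?_
  · rintro _ ⟨y, rfl⟩
    have hexp : k * (N / N.gcd k) = k / N.gcd k * N := by
      rw [← Nat.mul_div_assoc k (N.gcd_dvd_left k), mul_comm k N,
        Nat.mul_div_assoc N (N.gcd_dvd_right k), mul_comm]
    rw [MonoidHom.mem_ker, powMonoidHom_apply, powMonoidHom_apply, ← pow_mul, hexp, pow_mul,
      pow_card_eq_one']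
  · rw [IsCyclic.card_powMonoidHom_range, IsCyclic.card_powMonoidHom_ker,
      Nat.gcd_eq_right (Nat.div_dvd_of_dvd (Nat.gcd_dvd_left _ _))]

theorem IsCyclic.exists_pow_eq_iff {G : Type*} [CommGroup G] [IsCyclic G] [Finite G]
    (k : ℕ) (x : G) :
    (∃ y, y ^ k = x) ↔ x ^ (Nat.card G / (Nat.card G).gcd k) = 1 := by
  rw [← powMonoidHom_apply, ← MonoidHom.mem_ker, ← IsCyclic.range_powMonoidHom_eq_ker]
  rfl

theorem FiniteField.exists_pow_eq_iff {K : Type*} [Field K] [Finite K] (k : ℕ) {x : K}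
    (hx : x ≠ 0) :
    (∃ t, t ≠ 0 ∧ t ^ k = x) ↔ x ^ ((Nat.card K - 1) / (Nat.card K - 1).gcd k) = 1 := by
  have h := IsCyclic.exists_pow_eq_iff k (Units.mk0 x hx)
  rw [Nat.card_units, ← Units.val_eq_one, Units.val_pow_eq_pow_val, Units.val_mk0] at h
  rw [← h]
  constructor
  · rintro ⟨t, ht, rfl⟩
    exact ⟨Units.mk0 t ht, Units.ext (by simp)⟩
  · rintro ⟨y, hy⟩
    exact ⟨y, y.ne_zero, by simpa using congrArg Units.val hy⟩

section NonSquare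

variable {K : Type*} [Field K] [Fintype K] (hK : ringChar K ≠ 2) {n : K} (hn : ¬IsSquare n)
  {k : ℕ} (hk : Even k)
include hK hn hk

theorem FiniteField.pow_div_two_pow_card_sub_one_div_gcd :
    (n ^ (k / 2)) ^ ((Fintype.card K - 1) / (Fintype.card K - 1).gcd k) =
      (-1) ^ (k / (Fintype.card K - 1).gcd k) := by
  have hn0 : n ≠ 0 := by rintro rfl; exact hn .zero
  have heuler : n ^ (Fintype.card K / 2) = -1 :=
    (FiniteField.pow_dichotomy hK hn0).resolve_left (mt (FiniteField.isSquare_iff hK hn0).mpr hn)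
  have hcard := FiniteField.odd_card_of_char_ne_two hK
  obtain ⟨h, hh⟩ : 2 ∣ (Fintype.card K - 1).gcd k := Nat.dvd_gcd (by omega) hk.two_dvd
  obtain ⟨v, hv⟩ := Nat.gcd_dvd_left (Fintype.card K - 1) k
  obtain ⟨u, hu⟩ := Nat.gcd_dvd_right (Fintype.card K - 1) k
  rw [hh] at hu hv
  rw [hh]
  rcases Nat.eq_zero_or_pos h with rfl | hpos
  · simp
  have hhalf : Fintype.card K / 2 = h * v := by rw [mul_assoc] at hv; omega
  have hc0 : 0 < 2 * h := by omega
  calc (n ^ (k / 2)) ^ ((Fintype.card K - 1) / (2 * h))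
      = (n ^ (h * v)) ^ u := by
        rw [hv, hu, Nat.mul_div_cancel_left v hc0, mul_assoc,
          Nat.mul_div_cancel_left _ two_pos, ← pow_mul, ← pow_mul, mul_right_comm]
    _ = (-1) ^ (k / (2 * h)) := by
        rw [← hhalf, heuler, hu, Nat.mul_div_cancel_left u hc0]

theorem FiniteField.exists_pow_eq_pow_div_two_iff :
    (∃ t, t ≠ 0 ∧ t ^ k = n ^ (k / 2)) ↔ Even (k / (Fintype.card K - 1).gcd k) := by
  have hn0 : n ≠ 0 := by rintro rfl; exact hn .zero
  rw [FiniteField.exists_pow_eq_iff k (pow_ne_zero _ hn0), Nat.card_eq_fintype_card,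
    FiniteField.pow_div_two_pow_card_sub_one_div_gcd hK hn hk,
    neg_one_pow_eq_one_iff_even (Ring.neg_one_ne_one_of_char_ne_two hK)]

theorem FiniteField.exists_pow_eq_neg_pow_div_two_iff :
    (∃ t, t ≠ 0 ∧ t ^ k = -n ^ (k / 2)) ↔
      (Even ((Fintype.card K - 1) / (Fintype.card K - 1).gcd k) ↔
        Even (k / (Fintype.card K - 1).gcd k)) := by
  have hn0 : n ≠ 0 := by rintro rfl; exact hn .zero
  rw [FiniteField.exists_pow_eq_iff k (neg_ne_zero.mpr (pow_ne_zero _ hn0)),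
    Nat.card_eq_fintype_card, neg_pow, FiniteField.pow_div_two_pow_card_sub_one_div_gcd hK hn hk,
    ← pow_add, neg_one_pow_eq_one_iff_even (Ring.neg_one_ne_one_of_char_ne_two hK), Nat.even_add]

end NonSquare

theorem Nat.even_pow_sub_one_div_sub_one_iff {a : ℕ} (ha : Odd a) (ha1 : a ≠ 1) (j : ℕ) :
    Even ((a ^ j - 1) / (a - 1)) ↔ Even j := by
  have ha2 : 2 ≤ a := by obtain ⟨k, rfl⟩ := ha; omega
  rw [← Nat.geomSum_eq ha2]
  induction j with
  | zero => simp
  | succ j ih =>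
    have hodd : ¬Even (a ^ j) := Nat.not_even_iff_odd.mpr ha.pow
    simp only [Finset.sum_range_succ, Nat.even_add, ih, Nat.even_add_one, hodd, iff_false]

theorem Nat.even_pow_sub_one_div_gcd_iff {p : ℕ} (hp : Odd p) (hp1 : p ≠ 1) (s m : ℕ) :
    Even ((p ^ s - 1) / (p ^ s - 1).gcd (p ^ m - 1)) ↔ Even (s / s.gcd m) := by
  rcases eq_or_ne (s.gcd m) 0 with hd | hd
  · simp [(Nat.gcd_eq_zero_iff.mp hd).1]
  have ha1 : p ^ s.gcd m ≠ 1 := fun h ↦ hp1 ((Nat.pow_eq_one.mp h).resolve_right hd)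
  rw [Nat.pow_sub_one_gcd_pow_sub_one,
    ← Nat.even_pow_sub_one_div_sub_one_iff hp.pow ha1 (s / s.gcd m),
    ← pow_mul, Nat.mul_div_cancel' (Nat.gcd_dvd_left s m)]

theorem nonsquare_power_in_sigma_sub_one_powers_general
    (p s m : ℕ) (hodd : Odd p)
    (L : Type*) [Field L] [Fintype L] (hcard : Fintype.card L = p ^ m)
    (n : L) (hn : ¬ ∃ t : L, t ^ 2 = n) :
    ((∃ t : L, t ≠ 0 ∧ t ^ (p ^ s - 1) = -(n ^ ((p ^ s - 1) / 2))) ↔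
      (Odd (s / Nat.gcd s m) ∧ Odd (m / Nat.gcd s m))) ∧
    ((∃ t : L, t ≠ 0 ∧ t ^ (p ^ s - 1) = n ^ ((p ^ s - 1) / 2)) ↔
      Even (s / Nat.gcd s m)) ∧
    (Even (s / Nat.gcd s m) → Odd (m / Nat.gcd s m)) := by
  have hcard1 : 1 < p ^ m := hcard ▸ Fintype.one_lt_card
  have hp1 : p ≠ 1 := by rintro rfl; simp at hcard1
  have hm0 : m ≠ 0 := by rintro rfl; simp at hcard1
  have hK : ringChar L ≠ 2 := fun h ↦ by
    simpa [hcard, Nat.odd_iff.mp hodd.pow] using FiniteField.even_card_of_char_two h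
  have hns : ¬IsSquare n := fun ⟨r, hr⟩ ↦ hn ⟨r, by rw [hr, sq]⟩
  have hk : Even (p ^ s - 1) := Nat.Odd.sub_odd hodd.pow odd_one
  have hpar_s := Nat.even_pow_sub_one_div_gcd_iff hodd hp1 s m
  have hpar_m := Nat.even_pow_sub_one_div_gcd_iff hodd hp1 m s
  rw [Nat.gcd_comm (p ^ s - 1)] at hpar_s
  rw [Nat.gcd_comm m] at hpar_m
  have hnot : ¬(Even (s / s.gcd m) ∧ Even (m / s.gcd m)) := fun ⟨hs, hm⟩ ↦
    Nat.not_coprime_of_dvd_of_dvd one_lt_two hs.two_dvd hm.two_dvd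
      (Nat.coprime_div_gcd_div_gcd (Nat.gcd_pos_of_pos_right s (Nat.pos_of_ne_zero hm0)))
  rw [FiniteField.exists_pow_eq_neg_pow_div_two_iff hK hns hk,
    FiniteField.exists_pow_eq_pow_div_two_iff hK hns hk, hcard, hpar_s, hpar_m]
  simp only [← Nat.not_even_iff_odd]
  tauto

/-- Lemma 7.5. -/
theorem nonsquare_power_in_sigma_sub_one_powers
    (p s m : ℕ) (hp : p.Prime) (hodd : Odd p) (hsm : s < m)
    (L : Type*) [Field L] [Fintype L] (hcard : Fintype.card L = p ^ m)
    (n : L) (hn : ¬ ∃ t : L, t ^ 2 = n) :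
    ((∃ t : L, t ≠ 0 ∧ t ^ (p ^ s - 1) = -(n ^ ((p ^ s - 1) / 2))) ↔
      (Odd (s / Nat.gcd s m) ∧ Odd (m / Nat.gcd s m))) ∧
    ((∃ t : L, t ≠ 0 ∧ t ^ (p ^ s - 1) = n ^ ((p ^ s - 1) / 2)) ↔
      Even (s / Nat.gcd s m)) ∧
    (Even (s / Nat.gcd s m) → Odd (m / Nat.gcd s m)) :=
  nonsquare_power_in_sigma_sub_one_powers_general p s m hodd L hcard n hn
end

section
/- Let p be an odd prime, L = F_{p^m}, σ = p^s with 0 < s < m, and suppose B(p,m,s,l,n,N) is a presemifield (l,n,N ∈ L*). Then B(p,m,s,l,n,N) is isotopic to a commutative presemifield if and only if there is (v₀,v₁) ≠ (0,0) in L × L such that, setting f := n v₀ + l n v₀^σ − l n N v₁^σ, both equations hold: l f^σ = nN v₀ + l nN v₀^σ − nN v₁, and v₀ = l v₀^σ + n v₁ − l n N v₁^σ. In particular such (v₀,v₁) exists whenever either (i) N² = n^{σ−1} and l ∈ (1/N)·L*^{σ−1}, or (ii) N = n^{σ−1} and l ∈ L*^{σ−1}. -/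
/-- `star` is isotopic to a commutative presemifield. -/
def IsotopicToCommutative {α : Type*} [AddCommGroup α] (star : α → α → α) : Prop :=
  ∃ (cdot : α → α → α) (A B C : α ≃+ α),
    (∀ x y z : α, cdot (x + y) z = cdot x z + cdot y z) ∧
    (∀ x y z : α, cdot x (y + z) = cdot x y + cdot x z) ∧
    (∀ x y : α, cdot x y = 0 → x = 0 ∨ y = 0) ∧
    (∀ x y : α, cdot x y = cdot y x) ∧
    (∀ x y : α, star (A x) (B y) = C (cdot x y))

/-- The two equations of Theorem 7.10, with `f = n v₀ + l n v₀^σ - l n N v₁^σ`. -/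
def BcommEqs {L : Type*} [Field L] (σ : ℕ) (l n N v₀ v₁ : L) : Prop :=
  l * (n * v₀ + l * n * v₀ ^ σ - l * n * N * v₁ ^ σ) ^ σ
      = n * N * v₀ + l * n * N * v₀ ^ σ - n * N * v₁ ∧
    v₀ = l * v₀ ^ σ + n * v₁ - l * n * N * v₁ ^ σ


/-! Because `X` is biadditive, it is isotopic to a commutative presemifield exactly when
`X (G x) y = X (G y) x` for some additive bijection `G` (take `G = A ∘ B⁻¹`; conversely
`x · y := X (G x) y`), and a nonzero additive `G` with this symmetry is automatically injective
since `X` has no zero divisors. The second coordinate of the symmetry forces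
`G (x₁, x₂) = (v₀ x₁ + w x₂, v₁ x₁ + v₀ x₂)`. Comparing first coordinates at `((t, 0), (1, 0))`
and `((t, 0), (0, 1))` gives identities `a t + b t ^ σ = 0` for all `t`; as `1 < σ < |L|`,
`t ↦ t ^ σ` is not the identity, so `a = b = 0`, which says `w = f` together with the two
equations. Conversely these equations make that map symmetric. In the special cases (i) and (ii)
one can take `(v₀, v₁) = (0, t⁻¹)` and `(t⁻¹, 0)` respectively. -/

section Isotopy

variable {α : Type*} [AddCommGroup α] {star : α → α → α}

theorem IsotopicToCommutative.exists_addEquiv_comm (h : IsotopicToCommutative star) :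
    ∃ G : α ≃+ α, ∀ x y, star (G x) y = star (G y) x := by
  obtain ⟨cdot, A, B, C, -, -, -, hcomm, hiso⟩ := h
  refine ⟨B.symm.trans A, fun x y => ?_⟩
  simp only [AddEquiv.trans_apply]
  conv_lhs => rw [← B.apply_symm_apply y]
  conv_rhs => rw [← B.apply_symm_apply x]
  rw [hiso, hiso, hcomm]

theorem injective_of_map_comm (hzero : ∀ y, star 0 y = 0)
    (hzd : ∀ x y, star x y = 0 → x = 0 ∨ y = 0) {G : α →+ α} (hG : G ≠ 0)
    (hcomm : ∀ x y, star (G x) y = star (G y) x) : Function.Injective G := by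
  refine (injective_iff_map_eq_zero G).2 fun x hx => ?_
  by_contra hx0
  refine hG (AddMonoidHom.ext fun y => ?_)
  have : star (G y) x = 0 := by rw [← hcomm, hx, hzero]
  exact (hzd _ _ this).resolve_right hx0

theorem isotopicToCommutative_of_comm [Finite α]
    (hadd_left : ∀ x y z, star (x + y) z = star x z + star y z)
    (hadd_right : ∀ x y z, star x (y + z) = star x y + star x z)
    (hzd : ∀ x y, star x y = 0 → x = 0 ∨ y = 0) {G : α →+ α} (hG : G ≠ 0)
    (hcomm : ∀ x y, star (G x) y = star (G y) x) : IsotopicToCommutative star := by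
  have hzero : ∀ y, star 0 y = 0 := fun y => by
    simpa using hadd_left 0 0 y
  have hinj := injective_of_map_comm hzero hzd hG hcomm
  refine ⟨fun x y => star (G x) y, AddEquiv.ofBijective G (Finite.injective_iff_bijective.1 hinj),
    AddEquiv.refl α, AddEquiv.refl α, fun x y z => ?_, fun x y z => hadd_right _ _ _,
    fun x y h => (hzd _ _ h).imp_left fun h => hinj (h.trans G.map_zero.symm), hcomm,
    fun _ _ => rfl⟩
  simp only [map_add, hadd_left]

end Isotopy

theorem exists_pow_ne_self {K : Type*} [Field K] [Fintype K] {q : ℕ} (hq : 1 < q)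
    (hqK : q < Fintype.card K) : ∃ t : K, t ^ q ≠ t := by
  by_contra! h
  refine FiniteField.X_pow_card_sub_X_ne_zero K hq
    (Polynomial.eq_zero_of_natDegree_lt_card_of_eval_eq_zero _ Function.injective_id
      (fun t => by simp [h]) ?_)
  rwa [FiniteField.X_pow_card_sub_X_natDegree_eq K hq]

theorem eq_zero_of_forall_mul_add_mul_pow_eq_zero {K : Type*} [Field K] [Fintype K] {q : ℕ}
    (hq : 1 < q) (hqK : q < Fintype.card K) {a b : K} (h : ∀ t : K, a * t + b * t ^ q = 0) :
    a = 0 ∧ b = 0 := by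
  obtain ⟨t, ht⟩ := exists_pow_ne_self hq hqK
  have hb : b * (t ^ q - t) = 0 := by linear_combination h t - t * h 1
  have hb : b = 0 := (mul_eq_zero.1 hb).resolve_right (sub_ne_zero.2 ht)
  exact ⟨by simpa [hb] using h 1, hb⟩

section Xmul

variable {L : Type*} [Field L]

theorem Xmul_add_left {p : ℕ} [ExpChar L p] (s : ℕ) (l n N v : L) (x y z : L × L) :
    Xmul (p ^ s) l n N v (x + y) z = Xmul (p ^ s) l n N v x z + Xmul (p ^ s) l n N v y z := by
  ext <;> simp only [Xmul, Xh, Prod.fst_add, Prod.snd_add, add_pow_expChar_pow] <;> ring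

theorem Xmul_add_right {p : ℕ} [ExpChar L p] (s : ℕ) (l n N v : L) (x y z : L × L) :
    Xmul (p ^ s) l n N v x (y + z) = Xmul (p ^ s) l n N v x y + Xmul (p ^ s) l n N v x z := by
  ext <;> simp only [Xmul, Xh, Prod.fst_add, Prod.snd_add, add_pow_expChar_pow] <;> ring

def BcommMap (σ : ℕ) (l n N v₀ v₁ : L) : L × L →+ L × L :=
  AddMonoidHom.mk'
    (fun x => (v₀ * x.1 + (n * v₀ + l * n * v₀ ^ σ - l * n * N * v₁ ^ σ) * x.2,
      v₁ * x.1 + v₀ * x.2))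
    (fun x y => by ext <;> simp only [Prod.fst_add, Prod.snd_add] <;> ring)

theorem BcommMap_ne_zero {σ : ℕ} {l n N v₀ v₁ : L} (hv : (v₀, v₁) ≠ (0, 0)) :
    BcommMap σ l n N v₀ v₁ ≠ 0 := by
  intro h
  apply hv
  simpa [BcommMap] using DFunLike.congr_fun h (1, 0)

theorem Xmul_BcommMap_comm {p : ℕ} [ExpChar L p] {s : ℕ} {l n N v₀ v₁ : L}
    (h : BcommEqs (p ^ s) l n N v₀ v₁) (x y : L × L) :
    Xmul (p ^ s) l n N 1 (BcommMap (p ^ s) l n N v₀ v₁ x) y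
      = Xmul (p ^ s) l n N 1 (BcommMap (p ^ s) l n N v₀ v₁ y) x := by
  obtain ⟨hI, hII⟩ := h
  simp only [add_pow_expChar_pow, sub_pow_expChar_pow, mul_pow] at hI
  ext
  · simp only [Xmul, Xh, BcommMap, AddMonoidHom.mk'_apply, add_pow_expChar_pow,
      sub_pow_expChar_pow, mul_pow]
    linear_combination
      ((x.1 * y.1 ^ p ^ s - x.1 ^ p ^ s * y.1)
          - n * N * (x.2 * y.2 ^ p ^ s - x.2 ^ p ^ s * y.2)) * hII
        + (-(x.1 * y.2 ^ p ^ s - x.2 ^ p ^ s * y.1)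
          - n * (x.2 * y.2 ^ p ^ s - x.2 ^ p ^ s * y.2)) * hI
  · simp only [Xmul, BcommMap, AddMonoidHom.mk'_apply]
    ring

end Xmul

theorem BcommEqs_of_Xmul_comm {L : Type*} [Field L] [Fintype L] {σ : ℕ} (hσ : 1 < σ)
    (hσL : σ < Fintype.card L) {l n N : L} {G : L × L → L × L}
    (hG : ∀ x y, Xmul σ l n N 1 (G x) y = Xmul σ l n N 1 (G y) x) :
    BcommEqs σ l n N (G (1, 0)).1 (G (1, 0)).2 := by
  set v₀ := (G (1, 0)).1
  set v₁ := (G (1, 0)).2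
  set w := (G (0, 1)).1
  have hsnd : ∀ x y, (G x).1 * y.2 + (G x).2 * y.1 = (G y).1 * x.2 + (G y).2 * x.1 :=
    fun x y => congrArg Prod.snd (hG x y)
  have hG01 : (G (0, 1)).2 = v₀ := by simpa using (hsnd (1, 0) (0, 1)).symm
  have hG_fst : ∀ t : L, G (t, 0) = (v₀ * t, v₁ * t) := fun t => by
    ext
    · simpa [hG01, mul_comm] using hsnd (t, 0) (0, 1)
    · simpa [mul_comm] using hsnd (t, 0) (1, 0)
  have hfst : ∀ t y, Xh σ l n N 1 (v₀ * t) (v₁ * t) y.1 y.2 = Xh σ l n N 1 (G y).1 (G y).2 t 0 :=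
    fun t y => by simpa [Xmul, hG_fst] using congrArg Prod.fst (hG (t, 0) y)
  have hσ0 : σ ≠ 0 := by omega
  obtain ⟨hII, -⟩ := eq_zero_of_forall_mul_add_mul_pow_eq_zero hσ hσL
    (a := v₀ - n * v₁ - l * v₀ ^ σ + l * n * N * v₁ ^ σ)
    (b := -(v₀ - n * v₁ - l * v₀ ^ σ + l * n * N * v₁ ^ σ)) fun t => by
      have := hfst t (1, 0)
      simp only [Xh, mul_pow, one_pow, zero_pow hσ0] at this
      linear_combination this
  obtain ⟨hI, hw⟩ := eq_zero_of_forall_mul_add_mul_pow_eq_zero hσ hσL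
    (a := n * N * v₀ - n * N * v₁ + l * n * N * v₀ ^ σ - l * w ^ σ)
    (b := n * v₀ + l * n * v₀ ^ σ - l * n * N * v₁ ^ σ - w) fun t => by
      have := hfst t (0, 1)
      simp only [Xh, mul_pow, one_pow, zero_pow hσ0, hG01] at this
      linear_combination this
  rw [sub_eq_zero] at hw
  constructor
  · rw [hw]
    linear_combination -hI
  · linear_combination hII

theorem pow_sub_one_mul_inv_pow {K : Type*} [Field K] {t : K} (ht : t ≠ 0) {q : ℕ}
    (hq : q ≠ 0) : t ^ (q - 1) * t⁻¹ ^ q = t⁻¹ := by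
  rw [inv_pow, ← pow_sub_one_mul hq t]
  field_simp

section SufficientConditions

variable {L : Type*} [Field L] {p : ℕ} [ExpChar L p] {s : ℕ} {n t : L}

theorem BcommEqs_zero_inv {N : L} (hN : N ≠ 0) (ht : t ≠ 0) (hN2 : N ^ 2 = n ^ (p ^ s - 1)) :
    BcommEqs (p ^ s) (1 / N * t ^ (p ^ s - 1)) n N 0 t⁻¹ := by
  have hq : p ^ s ≠ 0 := (expChar_pow_pos L p s).ne'
  have ht' := pow_sub_one_mul_inv_pow ht hq
  have hNN : N * N⁻¹ = 1 := mul_inv_cancel₀ hN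
  have hf : n * 0 + 1 / N * t ^ (p ^ s - 1) * n * 0 ^ p ^ s
      - 1 / N * t ^ (p ^ s - 1) * n * N * t⁻¹ ^ p ^ s = -(n * t⁻¹) := by
    rw [zero_pow hq, one_div]
    linear_combination (-N⁻¹ * N * n) * ht' - n * t⁻¹ * hNN
  have hnq : n ^ p ^ s = n * N ^ 2 := by rw [hN2, mul_pow_sub_one hq]
  constructor
  · rw [hf, neg_pow, neg_one_pow_expChar_pow, mul_pow, hnq, zero_pow hq, one_div]
    linear_combination (-N⁻¹ * n * N ^ 2) * ht' - n * N * t⁻¹ * hNN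
  · rw [zero_pow hq, one_div]
    linear_combination (N⁻¹ * N * n) * ht' + n * t⁻¹ * hNN

theorem BcommEqs_inv_zero (ht : t ≠ 0) :
    BcommEqs (p ^ s) (t ^ (p ^ s - 1)) n (n ^ (p ^ s - 1)) t⁻¹ 0 := by
  have hq : p ^ s ≠ 0 := (expChar_pow_pos L p s).ne'
  have ht' := pow_sub_one_mul_inv_pow ht hq
  have hf : n * t⁻¹ + t ^ (p ^ s - 1) * n * t⁻¹ ^ p ^ s
      - t ^ (p ^ s - 1) * n * n ^ (p ^ s - 1) * 0 ^ p ^ s = (1 + 1) * (n * t⁻¹) := by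
    rw [zero_pow hq]
    linear_combination n * ht'
  constructor
  · rw [hf, mul_pow, add_pow_expChar_pow, one_pow, mul_pow, ← mul_pow_sub_one hq n]
    linear_combination n * n ^ (p ^ s - 1) * ht'
  · rw [zero_pow hq]
    linear_combination -ht'

end SufficientConditions

theorem B_family_commutative_iff_general
    (p m s : ℕ) (hp : p.Prime) (hs : 0 < s) (hsm : s < m)
    (L : Type*) [Field L] [Fintype L] (hcard : Fintype.card L = p ^ m)
    (l n N : L) (hN : N ≠ 0)
    (hpre : ∀ x y : L × L, Xmul (p ^ s) l n N 1 x y = 0 → x = 0 ∨ y = 0) :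
    (IsotopicToCommutative (Xmul (p ^ s) l n N 1) ↔
      ∃ v₀ v₁ : L, (v₀, v₁) ≠ (0, 0) ∧ BcommEqs (p ^ s) l n N v₀ v₁) ∧
    (((N ^ 2 = n ^ (p ^ s - 1) ∧ ∃ t : L, t ≠ 0 ∧ l = (1 / N) * t ^ (p ^ s - 1)) ∨
        (N = n ^ (p ^ s - 1) ∧ ∃ t : L, t ≠ 0 ∧ l = t ^ (p ^ s - 1))) →
      ∃ v₀ v₁ : L, (v₀, v₁) ≠ (0, 0) ∧ BcommEqs (p ^ s) l n N v₀ v₁) := by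
  have : Fact p.Prime := ⟨hp⟩
  have : CharP L p := charP_of_card_eq_prime_pow hcard
  have hσ : 1 < p ^ s := Nat.one_lt_pow hs.ne' hp.one_lt
  have hσL : p ^ s < Fintype.card L := hcard ▸ Nat.pow_lt_pow_right hp.one_lt hsm
  refine ⟨⟨fun h => ?_, fun ⟨v₀, v₁, hv, hvB⟩ => ?_⟩, ?_⟩
  · obtain ⟨G, hG⟩ := h.exists_addEquiv_comm
    refine ⟨_, _, ?_, BcommEqs_of_Xmul_comm hσ hσL hG⟩
    rw [Prod.mk_zero_zero, ← G.map_zero]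
    exact G.injective.ne (by simp)
  · exact isotopicToCommutative_of_comm (Xmul_add_left s l n N 1) (Xmul_add_right s l n N 1)
      hpre (BcommMap_ne_zero hv) (Xmul_BcommMap_comm hvB)
  · rintro (⟨hN2, t, ht, rfl⟩ | ⟨rfl, t, ht, rfl⟩)
    · exact ⟨0, t⁻¹, by simpa using ht, BcommEqs_zero_inv hN ht hN2⟩
    · exact ⟨t⁻¹, 0, by simpa using ht, BcommEqs_inv_zero ht⟩

/-- Theorem 7.10. -/
theorem B_family_commutative_iff
    (p m s : ℕ) (hp : p.Prime) (hodd : Odd p) (hs : 0 < s) (hsm : s < m)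
    (L : Type*) [Field L] [Fintype L] (hcard : Fintype.card L = p ^ m)
    (l n N : L) (hl : l ≠ 0) (hn : n ≠ 0) (hN : N ≠ 0)
    (hpre : ∀ x y : L × L, Xmul (p ^ s) l n N 1 x y = 0 → x = 0 ∨ y = 0) :
    (IsotopicToCommutative (Xmul (p ^ s) l n N 1) ↔
      ∃ v₀ v₁ : L, (v₀, v₁) ≠ (0, 0) ∧ BcommEqs (p ^ s) l n N v₀ v₁) ∧
    (((N ^ 2 = n ^ (p ^ s - 1) ∧ ∃ t : L, t ≠ 0 ∧ l = (1 / N) * t ^ (p ^ s - 1)) ∨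
        (N = n ^ (p ^ s - 1) ∧ ∃ t : L, t ≠ 0 ∧ l = t ^ (p ^ s - 1))) →
      ∃ v₀ v₁ : L, (v₀, v₁) ≠ (0, 0) ∧ BcommEqs (p ^ s) l n N v₀ v₁) :=
  B_family_commutative_iff_general p m s hp hs hsm L hcard l n N hN hpre
end

section
/- Let p be an odd prime, L = F_{p^m}, σ = p^s with 0 < s < m, l, n, N ∈ L*, and v ∈ {0,1}, and suppose the product * = X(p,m,s,v,l,n,N) on L × L is a presemifield (−l ∉ L*^{σ−1} and t^{σ+1} − v t^σ − (v/N)t + 1/(nN) ≠ 0 for all t ∈ L). Let β, γ : L×L → L×L satisfy (1,0)*β(x) = x and γ(x)*(1,0) = (1,0)*x for all x, and define x∘y := β(γ(x)*y). Then (c,d) ∈ L × L lies in the middle nucleus of the semifield (L×L, +, ∘) if and only if both of the following hold: c − c^{σ²} = (nv(d + N d^σ))^σ − nv(d + N d^σ), and (nv)^σ (c − c^σ)^σ + nvN (c − c^σ) = (nN)^σ d^{σ²} − nN d. -/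
/-!
A `u` lies in the middle nucleus of the isotope `x ∘ y = β (γ x * y)` iff there are maps `M`, `G`
with `M z * y = z * G y` for all `z, y` and `G (1, 0) = u`. For `X` the second coordinate of a
product is the plain `a d + b c`, which pins `G` down to `G y = (c y₁ + b y₂, d y₁ + a y₂)` with
`a, b` read off from `M (1, 0)` and `M (0, 1)`. Comparing first coordinates at `y = (t, 0)` gives
identities `A t + B t^σ = A' t + B' t^σ` on all of `L`; since `1 < σ < |L|` the coefficients
agree, and eliminating `a` and `b` leaves the two equations. Conversely, the two equations are
exactly what makes the maps so obtained satisfy `M z * y = z * G y`.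
-/

theorem isotope_middle_nucleus_iff_exists_intertwining {S : Type*} (mul : S → S → S) {e : S}
    (hA : Function.Bijective (mul e)) (hB : Function.Injective (mul · e)) {β γ : S → S}
    (hβ : ∀ x, mul e (β x) = x) (hγ : ∀ x, mul (γ x) e = mul e x) {circ : S → S → S}
    (hcirc : ∀ x y, circ x y = β (mul (γ x) y)) (u : S) :
    (∀ x y, circ (circ x u) y = circ x (circ u y)) ↔
      ∃ M G : S → S, G e = u ∧ ∀ z y, mul (M z) y = mul z (G y) := by
  have hβ_inj : Function.Injective β := fun x y h => by rw [← hβ x, ← hβ y, h]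
  have hγ_surj : Function.Surjective γ := fun z => by
    obtain ⟨x, hx⟩ := hA.2 (mul z e)
    exact ⟨x, hB ((hγ x).trans hx)⟩
  simp only [hcirc]
  constructor
  · intro h
    -- `M` and `G` are right and left `∘`-multiplication by `u`, transported back to `mul`.
    refine ⟨fun z => γ (β (mul z u)), fun y => β (mul (γ u) y), hA.1 ?_, fun z y => ?_⟩
    · rw [hβ, hγ]
    · obtain ⟨x, rfl⟩ := hγ_surj z
      exact hβ_inj (h x y)
  · rintro ⟨M, G, hGe, hMG⟩ x y
    have hγu : γ u = M e := hB (show mul (γ u) e = mul (M e) e by rw [hγ, ← hGe, hMG])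
    have hG : ∀ y, β (mul (γ u) y) = G y := fun y => hA.1 (by rw [hβ, hγu, hMG])
    have hM : ∀ z, γ (β (mul z u)) = M z :=
      fun z => hB (show mul _ e = mul _ e by rw [hγ, hβ, ← hGe, hMG])
    rw [hM, hG, hMG]

open Polynomial in
theorem FiniteField.eq_of_forall_mul_add_mul_pow_eq {K : Type*} [Field K] [Fintype K] {q : ℕ}
    (hq : 1 < q) (hqK : q < Fintype.card K) {a b a' b' : K}
    (h : ∀ t, a * t + b * t ^ q = a' * t + b' * t ^ q) : a = a' ∧ b = b' := by
  set f : K[X] := C (a - a') * X + C (b - b') * X ^ q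
  have hf : f = 0 := by
    refine eq_zero_of_forall_eval_zero_of_natDegree_lt_card f (fun t => ?_) ?_
    · simp only [f, eval_add, eval_mul, eval_C, eval_X, eval_pow]
      linear_combination h t
    · have hdeg : f.natDegree ≤ q := by simp only [f]; compute_degree; omega
      simpa only [Cardinal.mk_fintype, Nat.cast_lt] using hdeg.trans_lt hqK
  have h1 := congrArg (coeff · 1) hf
  have hq' := congrArg (coeff · q) hf
  simp only [f, coeff_add, coeff_C_mul_X_pow, coeff_C_mul_X, hq.ne, hq.ne', if_pos, if_false,
    add_zero, zero_add] at h1 hq'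
  exact ⟨sub_eq_zero.1 h1, sub_eq_zero.1 hq'⟩

theorem pow_pow_two_mul {M : Type*} [Monoid M] (x : M) (p s : ℕ) :
    x ^ p ^ (2 * s) = (x ^ p ^ s) ^ p ^ s := by
  rw [two_mul, pow_add, pow_mul]

section Frobenius

variable {L : Type*} [Field L] {q : ℕ} {l : L}

theorem eq_zero_of_pow_add_mul_eq_zero (hq : q ≠ 0) (hl : ¬ ∃ t : L, t ≠ 0 ∧ t ^ (q - 1) = -l)
    {x : L} (hx : x ^ q + l * x = 0) : x = 0 := by
  by_contra hx0
  refine hl ⟨x, hx0, mul_right_cancel₀ hx0 ?_⟩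
  rw [← pow_succ, Nat.sub_add_cancel (Nat.one_le_iff_ne_zero.2 hq)]
  linear_combination hx

theorem eq_zero_of_add_mul_pow_eq_zero (hq : q ≠ 0) (hl : ¬ ∃ t : L, t ≠ 0 ∧ t ^ (q - 1) = -l)
    {x : L} (hx : x + l * x ^ q = 0) : x = 0 := by
  by_contra hx0
  have h : x ^ (q - 1) * (-l) = 1 := mul_left_cancel₀ hx0 (by
    rw [← mul_assoc, ← pow_succ', Nat.sub_add_cancel (Nat.one_le_iff_ne_zero.2 hq)]
    linear_combination -hx)
  exact hl ⟨x⁻¹, inv_ne_zero hx0, by rw [inv_pow]; exact inv_eq_of_mul_eq_one_right h⟩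

end Frobenius

section Xmul

variable {L : Type*} [Field L] {σ : ℕ} {l n N v : L}

@[simp]
theorem Xmul_snd (x y : L × L) : (Xmul σ l n N v x y).2 = x.1 * y.2 + x.2 * y.1 := rfl

theorem Xmul_one_zero_left (hσ : σ ≠ 0) (x : L × L) :
    Xmul σ l n N v (1, 0) x = (x.1 ^ σ + l * x.1 + n * v * (N * x.2 ^ σ + l * x.2), x.2) :=
  Prod.ext (by simp [Xmul, Xh, zero_pow hσ]) (by simp)

theorem Xmul_zero_one_left (hσ : σ ≠ 0) (x : L × L) :
    Xmul σ l n N v (0, 1) x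
      = (-(n * N * (x.2 ^ σ + l * x.2)) - n * v * (x.1 ^ σ + l * N * x.1), x.1) := by
  refine Prod.ext ?_ (by simp)
  simp [Xmul, Xh, zero_pow hσ]
  ring

theorem Xmul_one_zero_right (hσ : σ ≠ 0) (x : L × L) :
    Xmul σ l n N v x (1, 0) = (x.1 + l * x.1 ^ σ - n * v * (x.2 + l * N * x.2 ^ σ), x.2) := by
  refine Prod.ext ?_ (by simp)
  simp [Xmul, Xh, zero_pow hσ]
  ring

theorem Xmul_mk_zero_right_fst (hσ : σ ≠ 0) (a b t : L) :
    (Xmul σ l n N v (a, b) (t, 0)).1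
      = l * (a ^ σ - n * v * N * b ^ σ) * t + (a - n * v * b) * t ^ σ := by
  simp [Xmul, Xh, zero_pow hσ]; ring

variable {p s : ℕ} [ExpChar L p] (hl : ¬ ∃ t : L, t ≠ 0 ∧ t ^ (p ^ s - 1) = -l)
include hl

theorem Xmul_one_zero_left_injective : Function.Injective (Xmul (p ^ s) l n N v (1, 0)) := by
  rintro ⟨x₁, x₂⟩ ⟨y₁, y₂⟩ h
  simp only [Xmul_one_zero_left (expChar_pow_pos L p s).ne', Prod.mk.injEq] at h
  obtain ⟨h₁, rfl⟩ := h
  have : (x₁ - y₁) ^ p ^ s + l * (x₁ - y₁) = 0 := by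
    rw [sub_pow_expChar_pow]; linear_combination h₁
  rw [sub_eq_zero.1 (eq_zero_of_pow_add_mul_eq_zero (expChar_pow_pos L p s).ne' hl this)]

theorem Xmul_one_zero_right_injective :
    Function.Injective (Xmul (p ^ s) l n N v · (1, 0)) := by
  rintro ⟨x₁, x₂⟩ ⟨y₁, y₂⟩ h
  simp only [Xmul_one_zero_right (expChar_pow_pos L p s).ne', Prod.mk.injEq] at h
  obtain ⟨h₁, rfl⟩ := h
  have : (x₁ - y₁) + l * (x₁ - y₁) ^ p ^ s = 0 := by
    rw [sub_pow_expChar_pow]; linear_combination h₁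
  rw [sub_eq_zero.1 (eq_zero_of_add_mul_pow_eq_zero (expChar_pow_pos L p s).ne' hl this)]

end Xmul

section MiddleNucleus

variable {L : Type*} [Field L] {p s : ℕ} [ExpChar L p] {l n N v c d : L}

theorem Xmul_eqns_of_intertwining [Fintype L] (hq : 1 < p ^ s) (hqL : p ^ s < Fintype.card L)
    (hl0 : l ≠ 0) {M G : L × L → L × L} (hG : G (1, 0) = (c, d))
    (hMG : ∀ z y, Xmul (p ^ s) l n N v (M z) y = Xmul (p ^ s) l n N v z (G y)) :
    c - c ^ (p ^ (2 * s))
        = (n * v * (d + N * d ^ (p ^ s))) ^ (p ^ s) - n * v * (d + N * d ^ (p ^ s)) ∧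
      (n * v) ^ (p ^ s) * (c - c ^ (p ^ s)) ^ (p ^ s) + n * v * N * (c - c ^ (p ^ s))
        = (n * N) ^ (p ^ s) * d ^ (p ^ (2 * s)) - n * N * d := by
  have hq0 : p ^ s ≠ 0 := by omega
  set a := (M (1, 0)).1
  set b := (M (0, 1)).1
  have hM₁ : M (1, 0) = (a, d) :=
    Prod.ext rfl (by simpa [hG] using congrArg Prod.snd (hMG (1, 0) (1, 0)))
  have hM₂ : M (0, 1) = (b, c) :=
    Prod.ext rfl (by simpa [hG] using congrArg Prod.snd (hMG (0, 1) (1, 0)))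
  have hGy : ∀ y, G y = (c * y.1 + b * y.2, d * y.1 + a * y.2) := fun y => Prod.ext
    (by simpa [hM₂, add_comm] using (congrArg Prod.snd (hMG (0, 1) y)).symm)
    (by simpa [hM₁, add_comm] using (congrArg Prod.snd (hMG (1, 0) y)).symm)
  have h₁ : ∀ t, l * (a ^ p ^ s - n * v * N * d ^ p ^ s) * t + (a - n * v * d) * t ^ p ^ s
      = l * (c + n * v * d) * t + (c ^ p ^ s + n * v * N * d ^ p ^ s) * t ^ p ^ s := fun t => by
    have h := congrArg Prod.fst (hMG (1, 0) (t, 0))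
    rw [hM₁, Xmul_mk_zero_right_fst hq0, hGy, Xmul_one_zero_left hq0] at h
    simp only at h
    linear_combination h
  have h₂ : ∀ t, l * (b ^ p ^ s - n * v * N * c ^ p ^ s) * t + (b - n * v * c) * t ^ p ^ s
      = l * (-(n * N * d) - n * v * N * c) * t
        + (-(n * N * d ^ p ^ s) - n * v * c ^ p ^ s) * t ^ p ^ s := fun t => by
    have h := congrArg Prod.fst (hMG (0, 1) (t, 0))
    rw [hM₂, Xmul_mk_zero_right_fst hq0, hGy, Xmul_zero_one_left hq0] at h
    simp only at h
    linear_combination h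
  obtain ⟨e₁, e₂⟩ := FiniteField.eq_of_forall_mul_add_mul_pow_eq hq hqL h₁
  obtain ⟨e₃, e₄⟩ := FiniteField.eq_of_forall_mul_add_mul_pow_eq hq hqL h₂
  have ha : a ^ p ^ s = c ^ p ^ (2 * s) + (n * v * (d + N * d ^ p ^ s)) ^ p ^ s := by
    rw [show a = c ^ p ^ s + n * v * (d + N * d ^ p ^ s) by linear_combination e₂,
      add_pow_expChar_pow, pow_pow_two_mul]
  have hb : b ^ p ^ s
      = (n * v) ^ p ^ s * (c - c ^ p ^ s) ^ p ^ s - (n * N) ^ p ^ s * d ^ p ^ (2 * s) := by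
    rw [show b = n * v * (c - c ^ p ^ s) - n * N * d ^ p ^ s by linear_combination e₄,
      sub_pow_expChar_pow, mul_pow (n * v), mul_pow (n * N), pow_pow_two_mul]
  exact ⟨by linear_combination ha - mul_left_cancel₀ hl0 e₁,
    by linear_combination mul_left_cancel₀ hl0 e₃ - hb⟩

theorem exists_Xmul_intertwining_of_eqns
    (E₁ : c - c ^ (p ^ (2 * s))
      = (n * v * (d + N * d ^ (p ^ s))) ^ (p ^ s) - n * v * (d + N * d ^ (p ^ s)))
    (E₂ : (n * v) ^ (p ^ s) * (c - c ^ (p ^ s)) ^ (p ^ s) + n * v * N * (c - c ^ (p ^ s))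
      = (n * N) ^ (p ^ s) * d ^ (p ^ (2 * s)) - n * N * d) :
    ∃ M G : L × L → L × L, G (1, 0) = (c, d) ∧
      ∀ z y, Xmul (p ^ s) l n N v (M z) y = Xmul (p ^ s) l n N v z (G y) := by
  -- The only possible values of `(M (1, 0)).1` and `(M (0, 1)).1`, by `Xmul_eqns_of_intertwining`.
  set a := c ^ p ^ s + n * v * (d + N * d ^ p ^ s)
  set b := n * v * (c - c ^ p ^ s) - n * N * d ^ p ^ s
  refine ⟨fun z => (a * z.1 + b * z.2, d * z.1 + c * z.2),
    fun y => (c * y.1 + b * y.2, d * y.1 + a * y.2), by simp,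
    fun z y => Prod.ext ?_ (by simp; ring)⟩
  simp only [Xmul, Xh, a, b, pow_pow_two_mul, add_pow_expChar_pow, sub_pow_expChar_pow,
    mul_pow] at E₁ E₂ ⊢
  linear_combination
    (-(l * z.1 ^ p ^ s * y.1) - l * n * v * z.1 ^ p ^ s * y.2
      + n * v * N * z.1 * y.2 ^ p ^ s - n * N * z.2 * y.2 ^ p ^ s) * E₁
    + (l * z.2 ^ p ^ s * y.1 + l * n * v * z.2 ^ p ^ s * y.2
      - z.1 * y.2 ^ p ^ s + n * v * z.2 * y.2 ^ p ^ s) * E₂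

end MiddleNucleus

theorem BC_middle_nucleus_equations_general
    (p m s : ℕ) (hp : p.Prime) (hs : 0 < s) (hsm : s < m)
    (L : Type*) [Field L] [Fintype L] (hcard : Fintype.card L = p ^ m)
    (l n N : L) (hl0 : l ≠ 0)
    (v : L)
    (hl : ¬ ∃ t : L, t ≠ 0 ∧ t ^ (p ^ s - 1) = -l)
    (β γ : L × L → L × L)
    (hβ : ∀ x : L × L, Xmul (p ^ s) l n N v (1, 0) (β x) = x)
    (hγ : ∀ x : L × L, Xmul (p ^ s) l n N v (γ x) (1, 0) = Xmul (p ^ s) l n N v (1, 0) x)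
    (circ : L × L → L × L → L × L)
    (hcirc : ∀ x y : L × L, circ x y = β (Xmul (p ^ s) l n N v (γ x) y)) :
    ∀ c d : L,
      (∀ x y : L × L, circ (circ x (c, d)) y = circ x (circ (c, d) y)) ↔
        (c - c ^ (p ^ (2 * s))
            = (n * v * (d + N * d ^ (p ^ s))) ^ (p ^ s) - n * v * (d + N * d ^ (p ^ s)) ∧
          (n * v) ^ (p ^ s) * (c - c ^ (p ^ s)) ^ (p ^ s) + n * v * N * (c - c ^ (p ^ s))
            = (n * N) ^ (p ^ s) * d ^ (p ^ (2 * s)) - n * N * d) := by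
  intro c d
  have : Fact p.Prime := ⟨hp⟩
  have : CharP L p := charP_of_card_eq_prime_pow hcard
  have hq : 1 < p ^ s := Nat.one_lt_pow hs.ne' hp.one_lt
  have hqL : p ^ s < Fintype.card L := hcard ▸ Nat.pow_lt_pow_right hp.one_lt hsm
  have hA := Xmul_one_zero_left_injective (n := n) (N := N) (v := v) hl
  rw [isotope_middle_nucleus_iff_exists_intertwining _ ⟨hA, Finite.injective_iff_surjective.1 hA⟩
    (Xmul_one_zero_right_injective hl) hβ hγ hcirc]
  exact ⟨fun ⟨_, _, hG, hMG⟩ => Xmul_eqns_of_intertwining hq hqL hl0 hG hMG,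
    fun ⟨E₁, E₂⟩ => exists_Xmul_intertwining_of_eqns E₁ E₂⟩

/-- Lemma 8.8: membership of `(c,d)` in the middle nucleus of the semifield associated
with `B(p,m,s,l,n,N)` (`v = 1`) or `C(p,m,s,l,-nN)` (`v = 0`) is equivalent to the two
displayed field equations. -/
theorem BC_middle_nucleus_equations
    (p m s : ℕ) (hp : p.Prime) (hodd : Odd p) (hs : 0 < s) (hsm : s < m)
    (L : Type*) [Field L] [Fintype L] (hcard : Fintype.card L = p ^ m)
    (l n N : L) (hl0 : l ≠ 0) (hn0 : n ≠ 0) (hN0 : N ≠ 0)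
    (v : L) (hv : v = 0 ∨ v = 1)
    (hl : ¬ ∃ t : L, t ≠ 0 ∧ t ^ (p ^ s - 1) = -l)
    (hpoly : ∀ t : L,
      t ^ (p ^ s + 1) - v * t ^ (p ^ s) - (v / N) * t + 1 / (n * N) ≠ 0)
    (β γ : L × L → L × L)
    (hβ : ∀ x : L × L, Xmul (p ^ s) l n N v (1, 0) (β x) = x)
    (hγ : ∀ x : L × L, Xmul (p ^ s) l n N v (γ x) (1, 0) = Xmul (p ^ s) l n N v (1, 0) x)
    (circ : L × L → L × L → L × L)
    (hcirc : ∀ x y : L × L, circ x y = β (Xmul (p ^ s) l n N v (γ x) y)) :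
    ∀ c d : L,
      (∀ x y : L × L, circ (circ x (c, d)) y = circ x (circ (c, d) y)) ↔
        (c - c ^ (p ^ (2 * s))
            = (n * v * (d + N * d ^ (p ^ s))) ^ (p ^ s) - n * v * (d + N * d ^ (p ^ s)) ∧
          (n * v) ^ (p ^ s) * (c - c ^ (p ^ s)) ^ (p ^ s) + n * v * N * (c - c ^ (p ^ s))
            = (n * N) ^ (p ^ s) * d ^ (p ^ (2 * s)) - n * N * d) :=
  BC_middle_nucleus_equations_general p m s hp hs hsm L hcard l n N hl0 v hl β γ hβ hγ circ hcirc
end
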